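/- arXiv:2412.16347 — 7 statements merged into one kernel-verified Lean document; each statement's English description precedes it below -/
import Mathlib

section
/- Let n ∈ ℕ, let [a,b] ⊆ ℝ be a compact interval, and let Q : [a,b] → ℂ^{n×n} be pointwise Hermitian. Then the following are equivalent: (iii) Q is differentiable at almost every t ∈ [a,b], its a.e. derivative Q̇ is Bochner-integrable on [a,b], and Q(s) − Q(r) ≤ ∫_r^s Q̇(t) dt in the Loewner order for all a ≤ r ≤ s ≤ b; (iv) Q has bounded variation on [a,b] (the supremum over all partitions a = τ_0 < τ_1 < … < τ_K = b of Σ_k ‖Q(τ_k) − Q(τ_{k−1})‖ is finite), and its singular part Q_s : t ↦ Q(t) − ∫_a^t Q̇(τ) dτ is weakly decreasing, where Q̇ denotes the a.e. derivative of Q (which exists a.e. with Bochner-integrable values whenever Q has bounded variation). -/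
/-!
Both conditions say that the singular part `S t = Q t - ∫_a^t Q'` satisfies
`S r - S s = ∫_r^s Q' - (Q s - Q r) ⪰ 0` for `r ≤ s`, so the only real content is the bounded
variation in (iii) ⇒ (iv). Write `Q s - Q r = ∫_r^s Q' - (S r - S s)`. The first term has norm at
most `∫_r^s ∑ |Q'ᵢⱼ|`; the second is positive semidefinite, so Cauchy–Schwarz for the form it
defines bounds each of its entries, hence its norm, by its trace. Thus
`‖Q s - Q r‖ ≤ φ s - φ r` with `φ t = ∫_a^t ∑ |Q'ᵢⱼ| - tr (S t)`, a nondecreasing function, and the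
variation of `Q` is at most that of `φ`.
-/

open MeasureTheory Matrix Set Filter Topology
open scoped ComplexOrder ENNReal

namespace Paper

/-- Loewner order `M ≤ N`, i.e. `N - M` is positive semidefinite. -/
def LoewnerLE {n : ℕ} (M N : Matrix (Fin n) (Fin n) ℂ) : Prop := (N - M).PosSemidef

/-- Entrywise (Bochner) interval integral of a matrix-valued function. -/
noncomputable def matInt {k l : ℕ} (G : ℝ → Matrix (Fin k) (Fin l) ℂ) (r s : ℝ) :
    Matrix (Fin k) (Fin l) ℂ :=
  Matrix.of fun i j => ∫ t in r..s, G t i j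

/-- `Q` is absolutely upper semicontinuous on `[a,b]`: there is a Bochner-integrable,
pointwise Hermitian `G` with `Q s - Q r ≤ ∫_r^s G` in the Loewner order. -/
def IsAUCOn {n : ℕ} (Q : ℝ → Matrix (Fin n) (Fin n) ℂ) (a b : ℝ) : Prop :=
  ∃ G : ℝ → Matrix (Fin n) (Fin n) ℂ,
    (∀ t, (G t).IsHermitian) ∧
    (∀ i j, IntegrableOn (fun t => G t i j) (Icc a b)) ∧
    ∀ r s : ℝ, a ≤ r → r ≤ s → s ≤ b → LoewnerLE (Q s - Q r) (matInt G r s)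

/-- A matrix-valued function is locally `L^p` on `I` (entrywise, on compact subintervals). -/
def MemLocLp {k l : ℕ} (p : ℝ≥0∞) (I : Set ℝ) (F : ℝ → Matrix (Fin k) (Fin l) ℂ) : Prop :=
  ∀ a b : ℝ, a ∈ I → b ∈ I → ∀ i j, MemLp (fun t => F t i j) p (volume.restrict (Icc a b))

/-- A vector-valued function is locally `L^p` on `I`. -/
def VecMemLocLp {k : ℕ} (p : ℝ≥0∞) (I : Set ℝ) (f : ℝ → Fin k → ℂ) : Prop :=
  ∀ a b : ℝ, a ∈ I → b ∈ I → ∀ i, MemLp (fun t => f t i) p (volume.restrict (Icc a b))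

/-- `x` is locally absolutely continuous on `I` with (a.e.) derivative `x'`. -/
def VecLocAC {k : ℕ} (I : Set ℝ) (x x' : ℝ → Fin k → ℂ) : Prop :=
  (∀ a b : ℝ, a ∈ I → b ∈ I → ∀ i, IntegrableOn (fun t => x' t i) (Icc a b)) ∧
  ∀ s t : ℝ, s ∈ I → t ∈ I → ∀ i, x t i = x s i + ∫ τ in s..t, x' τ i

/-- A matrix function is locally absolutely continuous on `I` with (a.e.) derivative `X'`. -/
def MatLocAC {k l : ℕ} (I : Set ℝ) (X X' : ℝ → Matrix (Fin k) (Fin l) ℂ) : Prop :=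
  (∀ a b : ℝ, a ∈ I → b ∈ I → ∀ i j, IntegrableOn (fun t => X' t i j) (Icc a b)) ∧
  ∀ s t : ℝ, s ∈ I → t ∈ I → ∀ i j, X t i j = X s i j + ∫ τ in s..t, X' τ i j

/-- The coefficients of an LTV system lie in the appropriate local Lebesgue spaces. -/
def IsLTV {n m : ℕ} (I : Set ℝ)
    (A : ℝ → Matrix (Fin n) (Fin n) ℂ) (B : ℝ → Matrix (Fin n) (Fin m) ℂ)
    (C : ℝ → Matrix (Fin m) (Fin n) ℂ) (D : ℝ → Matrix (Fin m) (Fin m) ℂ) : Prop :=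
  MemLocLp 1 I A ∧ MemLocLp 2 I B ∧ MemLocLp 2 I C ∧ MemLocLp ⊤ I D

/-- `(x, u, y)` is a state-input-output solution of the LTV system on `I`. -/
def IsSIOSol {n m : ℕ} (I : Set ℝ)
    (A : ℝ → Matrix (Fin n) (Fin n) ℂ) (B : ℝ → Matrix (Fin n) (Fin m) ℂ)
    (C : ℝ → Matrix (Fin m) (Fin n) ℂ) (D : ℝ → Matrix (Fin m) (Fin m) ℂ)
    (x : ℝ → Fin n → ℂ) (u y : ℝ → Fin m → ℂ) : Prop :=
  VecMemLocLp 2 I u ∧ VecMemLocLp 2 I y ∧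
  (∃ x', VecLocAC I x x' ∧ ∀ᵐ t ∂volume, t ∈ I → x' t = A t *ᵥ x t + B t *ᵥ u t) ∧
  ∀ᵐ t ∂volume, t ∈ I → y t = C t *ᵥ x t + D t *ᵥ u t

/-- The supplied energy `∫_{t0}^{t1} Re (y(t)^* u(t)) dt`. -/
noncomputable def supply {k : ℕ} (u y : ℝ → Fin k → ℂ) (t0 t1 : ℝ) : ℝ :=
  ∫ t in t0..t1, (star (y t) ⬝ᵥ u t).re

/-- `V` is a storage function for the LTV system on `I`. -/
def IsStorage {n m : ℕ} (I : Set ℝ)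
    (A : ℝ → Matrix (Fin n) (Fin n) ℂ) (B : ℝ → Matrix (Fin n) (Fin m) ℂ)
    (C : ℝ → Matrix (Fin m) (Fin n) ℂ) (D : ℝ → Matrix (Fin m) (Fin m) ℂ)
    (V : ℝ → (Fin n → ℂ) → ℝ) : Prop :=
  (∀ t ∈ I, ∀ x, 0 ≤ V t x) ∧ (∀ t ∈ I, V t 0 = 0) ∧
  ∀ x u y, IsSIOSol I A B C D x u y → ∀ t0 t1 : ℝ, t0 ∈ I → t1 ∈ I → t0 ≤ t1 →
    V t1 (x t1) - V t0 (x t0) ≤ supply u y t0 t1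

/-- The quadratic storage function candidate `V_Q(t, x) = ½ x^* Q(t) x`. -/
noncomputable def quadStorage {k : ℕ} (Q : ℝ → Matrix (Fin k) (Fin k) ℂ) :
    ℝ → (Fin k → ℂ) → ℝ :=
  fun t x => (1 / 2 : ℝ) * (star x ⬝ᵥ (Q t *ᵥ x)).re

/-- `X` is a fundamental solution matrix for `A` anchored at `t0`. -/
def IsFundamental {n : ℕ} (I : Set ℝ) (A : ℝ → Matrix (Fin n) (Fin n) ℂ) (t0 : ℝ)
    (X : ℝ → Matrix (Fin n) (Fin n) ℂ) : Prop :=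
  t0 ∈ I ∧ X t0 = 1 ∧ (∀ t ∈ I, IsUnit (X t)) ∧
  ∃ X', MatLocAC I X X' ∧ ∀ᵐ t ∂volume, t ∈ I → X' t = A t * X t

/-- The supply set whose supremum is the available storage `V_a(t0, x0)`. -/
def supplySet {n m : ℕ} (I : Set ℝ)
    (A : ℝ → Matrix (Fin n) (Fin n) ℂ) (B : ℝ → Matrix (Fin n) (Fin m) ℂ)
    (C : ℝ → Matrix (Fin m) (Fin n) ℂ) (D : ℝ → Matrix (Fin m) (Fin m) ℂ)
    (t0 : ℝ) (x0 : Fin n → ℂ) : Set ℝ :=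
  { c | ∃ t1 x u y, t1 ∈ I ∧ t0 ≤ t1 ∧ IsSIOSol I A B C D x u y ∧ x t0 = x0 ∧
      c = -(supply u y t0 t1) }

/-- Null space decomposition structure: `M i j = 0` whenever `i` or `j` (0-based) is `≥ r`,
and the top-left `r × r` block of `M` is Hermitian positive definite. -/
def NSDStruct {k : ℕ} (M : Matrix (Fin k) (Fin k) ℂ) (r : ℕ) : Prop :=
  (∀ i j : Fin k, (r ≤ (i : ℕ) ∨ r ≤ (j : ℕ)) → M i j = 0) ∧
  ∀ h : r ≤ k, (M.submatrix (Fin.castLE h) (Fin.castLE h)).PosDef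

attribute [local instance] Matrix.normedAddCommGroup

theorem _root_.Matrix.PosSemidef.norm_apply_mul_norm_apply_le {ι : Type*} [Fintype ι]
    [DecidableEq ι] {P : Matrix ι ι ℂ} (hP : P.PosSemidef) (i j : ι) :
    ‖P i j‖ * ‖P j i‖ ≤ (P i i).re * (P j j).re := by
  let := P.toSeminormedAddCommGroup hP
  let := P.toInnerProductSpace hP
  have inner_single : ∀ k l, inner ℂ (Pi.single k 1 : ι → ℂ) (Pi.single l 1) = P k l := by
    intro k l
    change (P *ᵥ Pi.single l 1) ⬝ᵥ star (Pi.single k 1) = _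
    simp [mulVec_single]
  simpa only [inner_single, RCLike.re_to_complex] using
    inner_mul_inner_self_le (𝕜 := ℂ) (Pi.single i 1 : ι → ℂ) (Pi.single j 1)

theorem _root_.Matrix.PosSemidef.re_apply_self_le_re_trace {ι : Type*} [Fintype ι]
    {P : Matrix ι ι ℂ} (hP : P.PosSemidef) (i : ι) : (P i i).re ≤ P.trace.re := by
  rw [trace, Complex.re_sum]
  exact Finset.single_le_sum (f := fun k => (P k k).re)
    (fun _ _ => (Complex.nonneg_iff.1 hP.diag_nonneg).1) (Finset.mem_univ i)

theorem _root_.Matrix.PosSemidef.norm_apply_le_re_trace {ι : Type*} [Fintype ι]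
    [DecidableEq ι] {P : Matrix ι ι ℂ} (hP : P.PosSemidef) (i j : ι) :
    ‖P i j‖ ≤ P.trace.re := by
  have hi := hP.re_apply_self_le_re_trace i
  have hj := hP.re_apply_self_le_re_trace j
  have hj0 : 0 ≤ (P j j).re := (Complex.nonneg_iff.1 hP.diag_nonneg).1
  refine le_of_sq_le_sq ?_ (hj0.trans hj)
  calc ‖P i j‖ ^ 2 = ‖P i j‖ * ‖P j i‖ := by
        rw [sq, ← hP.isHermitian.apply i j, norm_star]
    _ ≤ (P i i).re * (P j j).re := hP.norm_apply_mul_norm_apply_le i j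
    _ ≤ P.trace.re ^ 2 := by rw [sq]; exact mul_le_mul hi hj hj0 (hj0.trans hj)

theorem _root_.Matrix.PosSemidef.norm_le_re_trace {ι : Type*} [Fintype ι] [DecidableEq ι]
    {P : Matrix ι ι ℂ} (hP : P.PosSemidef) : ‖P‖ ≤ P.trace.re :=
  (norm_le_iff (Complex.nonneg_iff.1 hP.trace_nonneg).1).2 hP.norm_apply_le_re_trace

theorem norm_sub_le_of_loewnerLE {n : ℕ} {M N : Matrix (Fin n) (Fin n) ℂ} (h : LoewnerLE M N) :
    ‖N - M‖ ≤ N.trace.re - M.trace.re := by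
  simpa only [trace_sub, Complex.sub_re] using Matrix.PosSemidef.norm_le_re_trace h

theorem _root_.eVariationOn_le_of_edist_le {α E F : Type*} [LinearOrder α]
    [PseudoEMetricSpace E] [PseudoEMetricSpace F] {f : α → E} {g : α → F} {s : Set α}
    (h : ∀ x ∈ s, ∀ y ∈ s, edist (f x) (f y) ≤ edist (g x) (g y)) :
    eVariationOn f s ≤ eVariationOn g s :=
  iSup_le fun ⟨N, u, hu, us⟩ =>
    (Finset.sum_le_sum fun i _ => h _ (us (i + 1)) _ (us i)).trans
      (le_iSup (fun p : ℕ × { u : ℕ → α // Monotone u ∧ ∀ i, u i ∈ s} =>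
        ∑ i ∈ Finset.range p.1, edist (g (p.2.1 (i + 1))) (g (p.2.1 i))) ⟨N, u, hu, us⟩)

theorem _root_.boundedVariationOn_Icc_of_norm_sub_le {α E : Type*} [LinearOrder α]
    [SeminormedAddCommGroup E] {f : α → E} {φ : α → ℝ} {a b : α}
    (h : ∀ r s, a ≤ r → r ≤ s → s ≤ b → ‖f s - f r‖ ≤ φ s - φ r) :
    BoundedVariationOn f (Icc a b) := by
  rcases lt_or_ge b a with hba | hab
  · exact .of_subsingleton (by simp [Icc_eq_empty_of_lt hba])
  have hφ : MonotoneOn φ (Icc a b) := fun r hr s hs hrs =>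
    sub_nonneg.1 ((norm_nonneg _).trans (h r s hr.1 hrs hs.2))
  have hφbv : BoundedVariationOn φ (Icc a b) := by
    simpa using hφ.locallyBoundedVariationOn a b ⟨le_rfl, hab⟩ ⟨hab, le_rfl⟩
  refine ne_top_of_le_ne_top hφbv (eVariationOn_le_of_edist_le fun x hx y hy => ?_)
  wlog hxy : x ≤ y generalizing x y
  · rw [edist_comm, edist_comm (φ x)]
    exact this y hy x hx (le_of_not_ge hxy)
  rw [edist_dist, edist_dist, dist_comm, dist_eq_norm, Real.dist_eq, abs_sub_comm,
    abs_of_nonneg (sub_nonneg.2 (hφ hx hy hxy))]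
  exact ENNReal.ofReal_le_ofReal (h x y hx.1 hxy hy.2)

theorem _root_.MeasureTheory.IntegrableOn.intervalIntegrable_of_mem_Icc {E : Type*}
    [NormedAddCommGroup E] {f : ℝ → E} {a b r s : ℝ} (hf : IntegrableOn f (Icc a b))
    (hr : r ∈ Icc a b) (hs : s ∈ Icc a b) : IntervalIntegrable f volume r s :=
  (hf.mono_set (uIcc_subset_Icc hr hs)).intervalIntegrable

theorem intervalIntegrable_sum_norm_apply {k l : ℕ} {G : ℝ → Matrix (Fin k) (Fin l) ℂ} {r s : ℝ}
    (hG : ∀ i j, IntervalIntegrable (fun t => G t i j) volume r s) :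
    IntervalIntegrable (fun t => ∑ i, ∑ j, ‖G t i j‖) volume r s := by
  simpa only [Finset.sum_fn] using IntervalIntegrable.sum Finset.univ fun i _ =>
    IntervalIntegrable.sum Finset.univ fun j _ => (hG i j).norm

theorem matInt_sub_matInt {k l : ℕ} {G : ℝ → Matrix (Fin k) (Fin l) ℂ} {a r s : ℝ}
    (hr : ∀ i j, IntervalIntegrable (fun t => G t i j) volume a r)
    (hs : ∀ i j, IntervalIntegrable (fun t => G t i j) volume a s) :
    matInt G a s - matInt G a r = matInt G r s := by
  ext i j
  exact intervalIntegral.integral_interval_sub_left (hs i j) (hr i j)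

theorem norm_matInt_le {k l : ℕ} {G : ℝ → Matrix (Fin k) (Fin l) ℂ} {r s : ℝ} (hrs : r ≤ s)
    (hG : ∀ i j, IntervalIntegrable (fun t => G t i j) volume r s) :
    ‖matInt G r s‖ ≤ ∫ t in r..s, ∑ i, ∑ j, ‖G t i j‖ := by
  refine (norm_le_iff (intervalIntegral.integral_nonneg hrs fun t _ => by positivity)).2
    fun i j => ?_
  calc ‖matInt G r s i j‖ ≤ ∫ t in r..s, ‖G t i j‖ :=
        intervalIntegral.norm_integral_le_integral_norm hrs
    _ ≤ ∫ t in r..s, ∑ i, ∑ j, ‖G t i j‖ :=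
        intervalIntegral.integral_mono_on hrs (hG i j).norm (intervalIntegrable_sum_norm_apply hG)
          fun t _ => (Finset.single_le_sum (f := fun j => ‖G t i j‖) (fun _ _ => norm_nonneg _)
            (Finset.mem_univ j)).trans (Finset.single_le_sum (f := fun i => ∑ j, ‖G t i j‖)
              (fun _ _ => by positivity) (Finset.mem_univ i))

theorem loewnerLE_sub_matInt_iff {n : ℕ} {Q G : ℝ → Matrix (Fin n) (Fin n) ℂ} {a r s : ℝ}
    (hr : ∀ i j, IntervalIntegrable (fun t => G t i j) volume a r)
    (hs : ∀ i j, IntervalIntegrable (fun t => G t i j) volume a s) :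
    LoewnerLE (Q s - matInt G a s) (Q r - matInt G a r) ↔
      LoewnerLE (Q s - Q r) (matInt G r s) := by
  unfold LoewnerLE
  rw [← matInt_sub_matInt hr hs]
  constructor <;> intro h <;> convert h using 1 <;> abel

theorem boundedVariationOn_of_loewnerLE_sub_matInt {n : ℕ} {Q G : ℝ → Matrix (Fin n) (Fin n) ℂ}
    {a b : ℝ} (hG : ∀ i j, IntegrableOn (fun t => G t i j) (Icc a b))
    (hdec : ∀ r s, a ≤ r → r ≤ s → s ≤ b →
      LoewnerLE (Q s - matInt G a s) (Q r - matInt G a r)) :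
    BoundedVariationOn Q (Icc a b) := by
  have hII : ∀ r ∈ Icc a b, ∀ s ∈ Icc a b, ∀ i j,
      IntervalIntegrable (fun t => G t i j) volume r s :=
    fun r hr s hs i j => (hG i j).intervalIntegrable_of_mem_Icc hr hs
  set S := fun t => Q t - matInt G a t
  set ψ := fun t => ∫ τ in a..t, ∑ i, ∑ j, ‖G τ i j‖
  refine boundedVariationOn_Icc_of_norm_sub_le (φ := fun t => ψ t - (S t).trace.re)
    fun r s har hrs hsb => ?_
  have ha : a ∈ Icc a b := ⟨le_rfl, har.trans (hrs.trans hsb)⟩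
  have hr : r ∈ Icc a b := ⟨har, hrs.trans hsb⟩
  have hs : s ∈ Icc a b := ⟨har.trans hrs, hsb⟩
  have hψ : ψ s - ψ r = ∫ τ in r..s, ∑ i, ∑ j, ‖G τ i j‖ :=
    intervalIntegral.integral_interval_sub_left
      (intervalIntegrable_sum_norm_apply (hII a ha s hs))
      (intervalIntegrable_sum_norm_apply (hII a ha r hr))
  have hQ : Q s - Q r = matInt G r s - (S r - S s) := by
    rw [← matInt_sub_matInt (hII a ha r hr) (hII a ha s hs)]
    simp only [S]
    abel
  calc ‖Q s - Q r‖ ≤ ‖matInt G r s‖ + ‖S r - S s‖ := hQ ▸ norm_sub_le _ _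
    _ ≤ (ψ s - ψ r) + ((S r).trace.re - (S s).trace.re) :=
        add_le_add (hψ ▸ norm_matInt_le hrs (hII r hr s hs))
          (norm_sub_le_of_loewnerLE (hdec r s har hrs hsb))
    _ = _ := by ring

theorem statement2_general {n : ℕ} (a b : ℝ)
    (Q : ℝ → Matrix (Fin n) (Fin n) ℂ) :
    (∃ Q' : ℝ → Matrix (Fin n) (Fin n) ℂ,
      (∀ᵐ t ∂volume, t ∈ Icc a b → ∀ i j, HasDerivAt (fun τ => Q τ i j) (Q' t i j) t) ∧
      (∀ i j, IntegrableOn (fun t => Q' t i j) (Icc a b)) ∧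
      ∀ r s : ℝ, a ≤ r → r ≤ s → s ≤ b → LoewnerLE (Q s - Q r) (matInt Q' r s)) ↔
    (BoundedVariationOn Q (Icc a b) ∧
      ∃ Q' : ℝ → Matrix (Fin n) (Fin n) ℂ,
        (∀ᵐ t ∂volume, t ∈ Icc a b → ∀ i j, HasDerivAt (fun τ => Q τ i j) (Q' t i j) t) ∧
        (∀ i j, IntegrableOn (fun t => Q' t i j) (Icc a b)) ∧
        ∀ r s : ℝ, a ≤ r → r ≤ s → s ≤ b →
          LoewnerLE (Q s - matInt Q' a s) (Q r - matInt Q' a r)) := by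
  have hsing : ∀ Q' : ℝ → Matrix (Fin n) (Fin n) ℂ,
      (∀ i j, IntegrableOn (fun t => Q' t i j) (Icc a b)) → ∀ r s, a ≤ r → r ≤ s → s ≤ b →
      (LoewnerLE (Q s - matInt Q' a s) (Q r - matInt Q' a r) ↔
        LoewnerLE (Q s - Q r) (matInt Q' r s)) := by
    intro Q' hint r s har hrs hsb
    have ha : a ∈ Icc a b := ⟨le_rfl, har.trans (hrs.trans hsb)⟩
    exact loewnerLE_sub_matInt_iff
      (fun i j => (hint i j).intervalIntegrable_of_mem_Icc ha ⟨har, hrs.trans hsb⟩)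
      (fun i j => (hint i j).intervalIntegrable_of_mem_Icc ha ⟨har.trans hrs, hsb⟩)
  constructor
  · rintro ⟨Q', hderiv, hint, hle⟩
    have hdec : ∀ r s, a ≤ r → r ≤ s → s ≤ b →
        LoewnerLE (Q s - matInt Q' a s) (Q r - matInt Q' a r) :=
      fun r s har hrs hsb => (hsing Q' hint r s har hrs hsb).2 (hle r s har hrs hsb)
    exact ⟨boundedVariationOn_of_loewnerLE_sub_matInt hint hdec, Q', hderiv, hint, hdec⟩
  · rintro ⟨-, Q', hderiv, hint, hdec⟩
    exact ⟨Q', hderiv, hint, fun r s har hrs hsb =>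
      (hsing Q' hint r s har hrs hsb).1 (hdec r s har hrs hsb)⟩

/-- the a.e.-derivative characterization (iii) is equivalent to bounded
variation with weakly decreasing singular part (iv). -/
theorem statement2 {n : ℕ} (a b : ℝ) (hab : a ≤ b)
    (Q : ℝ → Matrix (Fin n) (Fin n) ℂ)
    (hQherm : ∀ t ∈ Icc a b, (Q t).IsHermitian) :
    (∃ Q' : ℝ → Matrix (Fin n) (Fin n) ℂ,
      (∀ᵐ t ∂volume, t ∈ Icc a b → ∀ i j, HasDerivAt (fun τ => Q τ i j) (Q' t i j) t) ∧
      (∀ i j, IntegrableOn (fun t => Q' t i j) (Icc a b)) ∧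
      ∀ r s : ℝ, a ≤ r → r ≤ s → s ≤ b → LoewnerLE (Q s - Q r) (matInt Q' r s)) ↔
    (BoundedVariationOn Q (Icc a b) ∧
      ∃ Q' : ℝ → Matrix (Fin n) (Fin n) ℂ,
        (∀ᵐ t ∂volume, t ∈ Icc a b → ∀ i j, HasDerivAt (fun τ => Q τ i j) (Q' t i j) t) ∧
        (∀ i j, IntegrableOn (fun t => Q' t i j) (Icc a b)) ∧
        ∀ r s : ℝ, a ≤ r → r ≤ s → s ≤ b →
          LoewnerLE (Q s - matInt Q' a s) (Q r - matInt Q' a r)) :=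
  statement2_general a b Q

end Paper
end

section
/- Let n ∈ ℕ, let I ⊆ ℝ be an open interval, let Q : I → ℂ^{n×n} be pointwise Hermitian and locally absolutely upper semicontinuous, and let t0 ∈ I. If L ∈ ℂ^{n×n} is such that Q(t) → L as t → t0 from the left, then L ≥ Q(t0) in the Loewner order; if R ∈ ℂ^{n×n} is such that Q(t) → R as t → t0 from the right, then Q(t0) ≥ R in the Loewner order. -/
/-! Positive semidefinite matrices form a closed set, and for `t < t0` the AUC inequality says
that `∫_t^{t0} G - (Q t0 - Q t)` is positive semidefinite. Letting `t → t0⁻`, the integral tends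
to `0` by absolute continuity of the Lebesgue integral, so `L - Q t0` is positive semidefinite
(Hermitian included). The right limit is symmetric, using `∫_{t0}^t G - (Q t - Q t0)`. -/

open MeasureTheory Matrix Set Filter Topology
open scoped ComplexOrder ENNReal

namespace Paper

theorem _root_.Matrix.isClosed_setOf_posSemidef {m R : Type*}
    [Ring R] [PartialOrder R] [StarRing R] [TopologicalSpace R]
    [IsTopologicalRing R] [ContinuousStar R] [OrderClosedTopology R] :
    IsClosed {M : Matrix m m R | M.PosSemidef} := by
  simp only [Matrix.PosSemidef, Matrix.IsHermitian, ofPred_and, ofPred_forall, Finsupp.sum]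
  exact (isClosed_eq continuous_id.matrix_conjTranspose continuous_id).inter <|
    isClosed_iInter fun x => isClosed_le continuous_const (by fun_prop)

theorem tendsto_matInt_nhdsLT {k l : ℕ} {G : ℝ → Matrix (Fin k) (Fin l) ℂ} {a b : ℝ}
    (hab : a < b) (hG : ∀ i j, IntegrableOn (fun t => G t i j) (Icc a b)) :
    Tendsto (fun t => matInt G t b) (𝓝[<] b) (𝓝 0) := by
  have hle : 𝓝[<] b ≤ 𝓝[uIcc a b] b := nhdsWithin_le_iff.mpr
    (mem_of_superset (Ioo_mem_nhdsLT hab) (uIcc_of_le hab.le ▸ Ioo_subset_Icc_self))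
  refine tendsto_pi_nhds.2 fun i => tendsto_pi_nhds.2 fun j => ?_
  have := intervalIntegral.continuousOn_primitive_interval_left
    (uIcc_of_le hab.le ▸ hG i j) b right_mem_uIcc
  simpa [matInt] using this.mono_left hle

theorem tendsto_matInt_nhdsGT {k l : ℕ} {G : ℝ → Matrix (Fin k) (Fin l) ℂ} {a b : ℝ}
    (hab : a < b) (hG : ∀ i j, IntegrableOn (fun t => G t i j) (Icc a b)) :
    Tendsto (fun t => matInt G a t) (𝓝[>] a) (𝓝 0) := by
  have hle : 𝓝[>] a ≤ 𝓝[uIcc a b] a := nhdsWithin_le_iff.mpr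
    (mem_of_superset (Ioo_mem_nhdsGT hab) (uIcc_of_le hab.le ▸ Ioo_subset_Icc_self))
  refine tendsto_pi_nhds.2 fun i => tendsto_pi_nhds.2 fun j => ?_
  have := intervalIntegral.continuousOn_primitive_interval
    (uIcc_of_le hab.le ▸ hG i j) a left_mem_uIcc
  simpa [matInt] using this.mono_left hle

theorem IsAUCOn.loewnerLE_of_tendsto_nhdsLT {n : ℕ} {Q : ℝ → Matrix (Fin n) (Fin n) ℂ}
    {a b : ℝ} (hQ : IsAUCOn Q a b) (hab : a < b) {L : Matrix (Fin n) (Fin n) ℂ}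
    (hL : Tendsto Q (𝓝[<] b) (𝓝 L)) : LoewnerLE (Q b) L := by
  obtain ⟨G, -, hGint, hGle⟩ := hQ
  have hlim : Tendsto (fun t => matInt G t b - (Q b - Q t)) (𝓝[<] b) (𝓝 (L - Q b)) := by
    simpa using (tendsto_matInt_nhdsLT hab hGint).sub (tendsto_const_nhds.sub hL)
  refine Matrix.isClosed_setOf_posSemidef.mem_of_tendsto hlim ?_
  filter_upwards [Ioo_mem_nhdsLT hab] with t ht using hGle t b ht.1.le ht.2.le le_rfl

theorem IsAUCOn.loewnerLE_of_tendsto_nhdsGT {n : ℕ} {Q : ℝ → Matrix (Fin n) (Fin n) ℂ}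
    {a b : ℝ} (hQ : IsAUCOn Q a b) (hab : a < b) {R : Matrix (Fin n) (Fin n) ℂ}
    (hR : Tendsto Q (𝓝[>] a) (𝓝 R)) : LoewnerLE R (Q a) := by
  obtain ⟨G, -, hGint, hGle⟩ := hQ
  have hlim : Tendsto (fun t => matInt G a t - (Q t - Q a)) (𝓝[>] a) (𝓝 (Q a - R)) := by
    simpa using (tendsto_matInt_nhdsGT hab hGint).sub (hR.sub tendsto_const_nhds)
  refine Matrix.isClosed_setOf_posSemidef.mem_of_tendsto hlim ?_
  filter_upwards [Ioo_mem_nhdsGT hab] with t ht using hGle a t le_rfl ht.1.le ht.2.le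

theorem statement3_general {n : ℕ} (I : Set ℝ) (hIopen : IsOpen I)
    (Q : ℝ → Matrix (Fin n) (Fin n) ℂ)
    (hAUC : ∀ a b : ℝ, a ∈ I → b ∈ I → IsAUCOn Q a b)
    (t0 : ℝ) (ht0 : t0 ∈ I) :
    (∀ L : Matrix (Fin n) (Fin n) ℂ,
        (∀ i j, Tendsto (fun t => Q t i j) (𝓝[<] t0) (𝓝 (L i j))) →
        LoewnerLE (Q t0) L) ∧
    (∀ R : Matrix (Fin n) (Fin n) ℂ,
        (∀ i j, Tendsto (fun t => Q t i j) (𝓝[>] t0) (𝓝 (R i j))) →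
        LoewnerLE R (Q t0)) := by
  have hI : I ∈ 𝓝 t0 := hIopen.mem_nhds ht0
  obtain ⟨a, hat0, haI⟩ := (eventually_mem_nhdsWithin.and (mem_nhdsWithin_of_mem_nhds hI) :
    ∀ᶠ t in 𝓝[<] t0, t ∈ Iio t0 ∧ t ∈ I).exists
  obtain ⟨b, ht0b, hbI⟩ := (eventually_mem_nhdsWithin.and (mem_nhdsWithin_of_mem_nhds hI) :
    ∀ᶠ t in 𝓝[>] t0, t ∈ Ioi t0 ∧ t ∈ I).exists
  exact ⟨fun L hL => (hAUC a t0 haI ht0).loewnerLE_of_tendsto_nhdsLT hat0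
      (tendsto_pi_nhds.2 fun i => tendsto_pi_nhds.2 (hL i)),
    fun R hR => (hAUC t0 b ht0 hbI).loewnerLE_of_tendsto_nhdsGT ht0b
      (tendsto_pi_nhds.2 fun i => tendsto_pi_nhds.2 (hR i))⟩

/-- a locally AUC pointwise Hermitian matrix function has one-sided limits
sandwiching its value: `lim_{t→t0⁻} Q(t) ≥ Q(t0) ≥ lim_{t→t0⁺} Q(t)`. -/
theorem statement3 {n : ℕ} (I : Set ℝ) (hIopen : IsOpen I) (hIconn : I.OrdConnected)
    (Q : ℝ → Matrix (Fin n) (Fin n) ℂ) (hQherm : ∀ t ∈ I, (Q t).IsHermitian)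
    (hAUC : ∀ a b : ℝ, a ∈ I → b ∈ I → IsAUCOn Q a b)
    (t0 : ℝ) (ht0 : t0 ∈ I) :
    (∀ L : Matrix (Fin n) (Fin n) ℂ,
        (∀ i j, Tendsto (fun t => Q t i j) (𝓝[<] t0) (𝓝 (L i j))) →
        LoewnerLE (Q t0) L) ∧
    (∀ R : Matrix (Fin n) (Fin n) ℂ,
        (∀ i j, Tendsto (fun t => Q t i j) (𝓝[>] t0) (𝓝 (R i j))) →
        LoewnerLE R (Q t0)) :=
  statement3_general I hIopen Q hAUC t0 ht0

end Paper
end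

section
/- Let n, m ∈ ℕ, let [a,b] ⊆ ℝ be a compact interval, let Q : [a,b] → ℂ^{n×n} be pointwise Hermitian and absolutely upper semicontinuous on [a,b], and let V : [a,b] → ℂ^{n×m} be absolutely continuous, i.e., there exists a Bochner-integrable W : [a,b] → ℂ^{n×m} with V(t) = V(a) + ∫_a^t W(τ) dτ for all t ∈ [a,b]. Then the pointwise Hermitian matrix function Q̃ : [a,b] → ℂ^{m×m}, Q̃(t) = V(t)* Q(t) V(t), is absolutely upper semicontinuous on [a,b]. Moreover, if Q(t) is positive semidefinite for every t, then Q̃(t) is positive semidefinite for every t. -/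
open MeasureTheory Matrix Set Filter Topology
open scoped ComplexOrder ENNReal

namespace Paper

/-!
Put `Q̃ = Vᴴ Q V`. For `r ≤ s`,
`Q̃ s - Q̃ r ≤ V sᴴ (∫_r^s G) V s + (V sᴴ Q r V s - V rᴴ Q r V r)`, and the bracket equals
`V sᴴ Q r (V s - V r) + (V s - V r)ᴴ Q r V r` with `V s - V r = ∫_r^s W`.
`V` is bounded on `[a, b]`, and so is `Q`: the Loewner defects of `Q` on `[a, r]` and `[r, b]`
are positive semidefinite and add up to one fixed matrix. Since `H ≤ ‖H‖ • 1` for Hermitian `H`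
in the `L²` operator norm, `Q̃ s - Q̃ r ≤ (∫_r^s (c² ‖G‖ + 2 c β ‖W‖)) • 1`, where `c` and `β`
bound `‖V‖` and `‖Q‖`.
-/

open scoped MatrixOrder Matrix.Norms.L2Operator

lemma loewnerLE_iff_le {n : ℕ} {M N : Matrix (Fin n) (Fin n) ℂ} : LoewnerLE M N ↔ M ≤ N :=
  Iff.rfl

section Congruence

variable {ι κ κ' : Type*} [Fintype ι] [DecidableEq ι] [Fintype κ] [DecidableEq κ]
  [Fintype κ'] [DecidableEq κ']

lemma norm_conjTranspose_mul_mul_le {𝕜 : Type*} [RCLike 𝕜] (A : Matrix ι κ 𝕜) (B : Matrix ι ι 𝕜)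
    (C : Matrix ι κ' 𝕜) : ‖Aᴴ * B * C‖ ≤ ‖A‖ * ‖B‖ * ‖C‖ := by
  calc ‖Aᴴ * B * C‖ ≤ ‖Aᴴ‖ * ‖B‖ * ‖C‖ :=
        (l2_opNorm_mul _ _).trans (by gcongr; exact l2_opNorm_mul _ _)
    _ = ‖A‖ * ‖B‖ * ‖C‖ := by rw [l2_opNorm_conjTranspose]

lemma conjTranspose_mul_mul_sub_le {Q₁ Q₂ G : Matrix ι ι ℂ} (hQ₁ : Q₁.IsHermitian)
    (hQ₂ : Q₂.IsHermitian) (hG : Q₁ - Q₂ ≤ G) (X Y : Matrix ι κ ℂ) :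
    Xᴴ * Q₁ * X - Yᴴ * Q₂ * Y ≤
      algebraMap ℝ _ (‖X‖ * ‖G‖ * ‖X‖ + (‖X‖ + ‖Y‖) * ‖Q₂‖ * ‖X - Y‖) := by
  have hGh : G.IsHermitian := by
    simpa using (le_iff.mp hG).isHermitian.add (hQ₁.sub hQ₂)
  set B := Xᴴ * G * X + (Xᴴ * Q₂ * X - Yᴴ * Q₂ * Y)
  have hle : Xᴴ * Q₁ * X - Yᴴ * Q₂ * Y ≤ B := by
    rw [le_iff]
    convert (le_iff.mp hG).conjTranspose_mul_mul_same X using 1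
    simp only [B, Matrix.mul_sub, Matrix.sub_mul]
    abel
  have hB : IsSelfAdjoint B := by
    rw [← isHermitian_iff_isSelfAdjoint]
    exact (isHermitian_conjTranspose_mul_mul X hGh).add
      ((isHermitian_conjTranspose_mul_mul X hQ₂).sub (isHermitian_conjTranspose_mul_mul Y hQ₂))
  have hcross : Xᴴ * Q₂ * X - Yᴴ * Q₂ * Y = Xᴴ * Q₂ * (X - Y) + (X - Y)ᴴ * Q₂ * Y := by
    simp only [conjTranspose_sub, Matrix.mul_sub, Matrix.sub_mul]
    abel
  have hnorm : ‖B‖ ≤ ‖X‖ * ‖G‖ * ‖X‖ + (‖X‖ + ‖Y‖) * ‖Q₂‖ * ‖X - Y‖ := by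
    refine (norm_add_le _ _).trans ?_
    rw [hcross]
    have h1 := norm_conjTranspose_mul_mul_le X Q₂ (X - Y)
    have h2 := norm_conjTranspose_mul_mul_le (X - Y) Q₂ Y
    have h3 := norm_add_le (Xᴴ * Q₂ * (X - Y)) ((X - Y)ᴴ * Q₂ * Y)
    linarith [norm_conjTranspose_mul_mul_le X G X]
  calc _ ≤ B := hle
    _ ≤ algebraMap ℝ _ ‖B‖ := hB.le_algebraMap_norm_self
    _ ≤ _ := algebraMap_mono _ hnorm

end Congruence

section MatrixIntegral

variable {k l : ℕ} {F : ℝ → Matrix (Fin k) (Fin l) ℂ} {a b r s : ℝ}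

lemma integrable_of_entries {μ : Measure ℝ} (hF : ∀ i j, Integrable (fun t => F t i j) μ) :
    Integrable F μ := by
  let e : (Fin k → Fin l → ℂ) ≃L[ℂ] Matrix (Fin k) (Fin l) ℂ :=
    (Matrix.ofLinearEquiv ℂ).toContinuousLinearEquiv
  have : Integrable (fun t => e.symm (F t)) μ :=
    Integrable.of_eval fun i => Integrable.of_eval fun j => hF i j
  simpa using e.toContinuousLinearMap.integrable_comp this

lemma matInt_eq_intervalIntegral (hF : IntervalIntegrable F volume r s) :
    matInt F r s = ∫ t in r..s, F t := by
  ext i j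
  exact (entryLinearMap ℂ ℂ i j).toContinuousLinearMap.intervalIntegral_comp_comm hF

lemma intervalIntegrable_of_entries (hF : ∀ i j, IntegrableOn (fun t => F t i j) (Icc a b))
    (hr : r ∈ Icc a b) (hs : s ∈ Icc a b) : IntervalIntegrable F volume r s :=
  (IntegrableOn.mono_set (integrable_of_entries hF) (uIcc_subset_Icc hr hs)).intervalIntegrable

lemma norm_matInt_le_s4 (hF : ∀ i j, IntegrableOn (fun t => F t i j) (Icc a b))
    (hr : r ∈ Icc a b) (hs : s ∈ Icc a b) (hrs : r ≤ s) :
    ‖matInt F r s‖ ≤ ∫ t in r..s, ‖F t‖ := by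
  rw [matInt_eq_intervalIntegral (intervalIntegrable_of_entries hF hr hs)]
  exact intervalIntegral.norm_integral_le_integral_norm hrs

lemma norm_matInt_le_integral_norm (hF : ∀ i j, IntegrableOn (fun t => F t i j) (Icc a b))
    (hr : r ∈ Icc a b) (hs : s ∈ Icc a b) (hrs : r ≤ s) :
    ‖matInt F r s‖ ≤ ∫ t in a..b, ‖F t‖ :=
  (norm_matInt_le_s4 hF hr hs hrs).trans <| intervalIntegral.integral_mono_interval hr.1 hrs hs.2
    (.of_forall fun _ => norm_nonneg _)
    (intervalIntegrable_of_entries hF (left_mem_Icc.2 (hr.1.trans hr.2))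
      (right_mem_Icc.2 (hr.1.trans hr.2))).norm

lemma matInt_add_matInt {t : ℝ} (hF : ∀ i j, IntegrableOn (fun t => F t i j) (Icc a b))
    (hr : r ∈ Icc a b) (hs : s ∈ Icc a b) (ht : t ∈ Icc a b) :
    matInt F r s + matInt F s t = matInt F r t := by
  have hrs := intervalIntegrable_of_entries hF hr hs
  have hst := intervalIntegrable_of_entries hF hs ht
  rw [matInt_eq_intervalIntegral hrs, matInt_eq_intervalIntegral hst,
    matInt_eq_intervalIntegral (hrs.trans hst),
    intervalIntegral.integral_add_adjacent_intervals hrs hst]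

end MatrixIntegral

lemma isAUCOn_of_le_algebraMap {n : ℕ} {Q : ℝ → Matrix (Fin n) (Fin n) ℂ} {a b : ℝ} {g : ℝ → ℝ}
    (hg : IntegrableOn g (Icc a b))
    (h : ∀ r s, a ≤ r → r ≤ s → s ≤ b → Q s - Q r ≤ algebraMap ℝ _ (∫ t in r..s, g t)) :
    IsAUCOn Q a b := by
  refine ⟨fun t => algebraMap ℝ _ (g t), fun t => ?_, fun i j => ?_, fun r s har hrs hsb => ?_⟩
  · exact isHermitian_iff_isSelfAdjoint.2 (.algebraMap _ (.all _))
  · by_cases hij : i = j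
    · simp only [algebraMap_matrix_apply, hij, if_true]
      exact hg.ofReal
    · simp [algebraMap_matrix_apply, hij]
  · have hint : matInt (fun t => algebraMap ℝ (Matrix (Fin n) (Fin n) ℂ) (g t)) r s =
        algebraMap ℝ _ (∫ t in r..s, g t) := by
      ext i j
      by_cases hij : i = j
      · simp [matInt, algebraMap_matrix_apply, hij, intervalIntegral.integral_ofReal]
      · simp [matInt, algebraMap_matrix_apply, hij]
    rw [loewnerLE_iff_le, hint]
    exact h r s har hrs hsb

lemma IsAUCOn.exists_norm_le {n : ℕ} {Q : ℝ → Matrix (Fin n) (Fin n) ℂ} {a b : ℝ}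
    (hQ : IsAUCOn Q a b) : ∃ β, ∀ r ∈ Icc a b, ‖Q r‖ ≤ β := by
  obtain ⟨G, -, hG, hGle⟩ := hQ
  set K := matInt G a b - (Q b - Q a) with hK_def
  refine ⟨‖Q a‖ + (∫ t in a..b, ‖G t‖) + ‖K‖, fun r hr => ?_⟩
  have ha : a ∈ Icc a b := left_mem_Icc.2 (hr.1.trans hr.2)
  have hb : b ∈ Icc a b := right_mem_Icc.2 (hr.1.trans hr.2)
  set P := matInt G a r - (Q r - Q a) with hP_def
  have hP : 0 ≤ P := nonneg_iff_posSemidef.2 (hGle a r le_rfl hr.1 hr.2)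
  have hPK : P ≤ K := by
    have hKP : K - P = matInt G r b - (Q b - Q r) := by
      rw [hK_def, hP_def, ← matInt_add_matInt hG ha hr hb]
      abel
    rw [le_iff, hKP]
    exact hGle r b hr.1 hr.2 le_rfl
  have hQr : Q r = Q a + matInt G a r - P := by
    rw [hP_def]
    abel
  calc ‖Q r‖ ≤ ‖Q a‖ + ‖matInt G a r‖ + ‖P‖ := by
        rw [hQr]
        exact (norm_sub_le _ _).trans (by gcongr; exact norm_add_le _ _)
    _ ≤ _ := by
        gcongr
        · exact norm_matInt_le_integral_norm hG ha hr hr.1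
        · exact CStarAlgebra.norm_le_norm_of_nonneg_of_le hP hPK

lemma norm_le_of_eq_add_matInt {n m : ℕ} {V W : ℝ → Matrix (Fin n) (Fin m) ℂ} {a b t : ℝ}
    (hW : ∀ i j, IntegrableOn (fun t => W t i j) (Icc a b))
    (hV : ∀ t ∈ Icc a b, V t = V a + matInt W a t) (ht : t ∈ Icc a b) :
    ‖V t‖ ≤ ‖V a‖ + ∫ t in a..b, ‖W t‖ := by
  rw [hV t ht]
  exact (norm_add_le _ _).trans <| by
    gcongr
    exact norm_matInt_le_integral_norm hW (left_mem_Icc.2 (ht.1.trans ht.2)) ht ht.1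

theorem IsAUCOn.conjTranspose_mul_mul {n m : ℕ} {a b : ℝ} {Q : ℝ → Matrix (Fin n) (Fin n) ℂ}
    (hQherm : ∀ t ∈ Icc a b, (Q t).IsHermitian) (hQ : IsAUCOn Q a b)
    {V W : ℝ → Matrix (Fin n) (Fin m) ℂ} (hW : ∀ i j, IntegrableOn (fun t => W t i j) (Icc a b))
    (hV : ∀ t ∈ Icc a b, V t = V a + matInt W a t) :
    IsAUCOn (fun t => (V t)ᴴ * Q t * V t) a b := by
  obtain ⟨β, hβ⟩ := hQ.exists_norm_le
  obtain ⟨G, -, hG, hGle⟩ := hQ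
  set c := ‖V a‖ + ∫ t in a..b, ‖W t‖
  have hGn : IntegrableOn (fun t => ‖G t‖) (Icc a b) := (integrable_of_entries hG).norm
  have hWn : IntegrableOn (fun t => ‖W t‖) (Icc a b) := (integrable_of_entries hW).norm
  refine isAUCOn_of_le_algebraMap (g := fun t => c * c * ‖G t‖ + 2 * c * β * ‖W t‖)
    ((hGn.const_mul _).add (hWn.const_mul _)) fun r s har hrs hsb => ?_
  have hr : r ∈ Icc a b := ⟨har, hrs.trans hsb⟩
  have hs : s ∈ Icc a b := ⟨har.trans hrs, hsb⟩
  have ha : a ∈ Icc a b := left_mem_Icc.2 (har.trans (hrs.trans hsb))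
  have hVsr : V s - V r = matInt W r s := by
    rw [hV s hs, hV r hr, ← matInt_add_matInt hW ha hr hs]
    abel
  calc _ ≤ algebraMap ℝ _
        (‖V s‖ * ‖matInt G r s‖ * ‖V s‖ + (‖V s‖ + ‖V r‖) * ‖Q r‖ * ‖V s - V r‖) :=
        conjTranspose_mul_mul_sub_le (hQherm s hs) (hQherm r hr) (hGle r s har hrs hsb) _ _
    _ ≤ algebraMap ℝ _ (c * (∫ t in r..s, ‖G t‖) * c + (c + c) * β * ∫ t in r..s, ‖W t‖) := by
        apply algebraMap_mono
        have hVs := norm_le_of_eq_add_matInt hW hV hs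
        have hVr := norm_le_of_eq_add_matInt hW hV hr
        have hGI := norm_matInt_le_s4 hG hr hs hrs
        have hWI := norm_matInt_le_s4 hW hr hs hrs
        have hQr := hβ r hr
        have hGI0 : 0 ≤ ∫ t in r..s, ‖G t‖ := (norm_nonneg _).trans hGI
        have hc0 : 0 ≤ c := (norm_nonneg _).trans hVs
        have hβ0 : 0 ≤ β := (norm_nonneg _).trans hQr
        rw [hVsr]
        gcongr
    _ = algebraMap ℝ _ (∫ t in r..s, (c * c * ‖G t‖ + 2 * c * β * ‖W t‖)) := by
        have hGrs := (intervalIntegrable_of_entries hG hr hs).norm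
        have hWrs := (intervalIntegrable_of_entries hW hr hs).norm
        congr 1
        rw [intervalIntegral.integral_add (hGrs.const_mul _) (hWrs.const_mul _),
          intervalIntegral.integral_const_mul, intervalIntegral.integral_const_mul]
        ring

theorem statement4_general {n m : ℕ} (a b : ℝ)
    (Q : ℝ → Matrix (Fin n) (Fin n) ℂ) (hQherm : ∀ t ∈ Icc a b, (Q t).IsHermitian)
    (hQ : IsAUCOn Q a b)
    (V W : ℝ → Matrix (Fin n) (Fin m) ℂ)
    (hW : ∀ i j, IntegrableOn (fun t => W t i j) (Icc a b))
    (hV : ∀ t ∈ Icc a b, V t = V a + matInt W a t) :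
    (∀ t ∈ Icc a b, ((V t)ᴴ * Q t * V t).IsHermitian) ∧
    IsAUCOn (fun t => (V t)ᴴ * Q t * V t) a b ∧
    ((∀ t ∈ Icc a b, (Q t).PosSemidef) →
      ∀ t ∈ Icc a b, ((V t)ᴴ * Q t * V t).PosSemidef) :=
  ⟨fun t ht => isHermitian_conjTranspose_mul_mul (V t) (hQherm t ht),
    hQ.conjTranspose_mul_mul hQherm hW hV,
    fun hpsd t ht => (hpsd t ht).conjTranspose_mul_mul_same (V t)⟩

/-- AUC matrix functions are closed under congruence with absolutely
continuous matrix functions, and positive semidefiniteness is preserved. -/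
theorem statement4 {n m : ℕ} (a b : ℝ) (hab : a ≤ b)
    (Q : ℝ → Matrix (Fin n) (Fin n) ℂ) (hQherm : ∀ t ∈ Icc a b, (Q t).IsHermitian)
    (hQ : IsAUCOn Q a b)
    (V W : ℝ → Matrix (Fin n) (Fin m) ℂ)
    (hW : ∀ i j, IntegrableOn (fun t => W t i j) (Icc a b))
    (hV : ∀ t ∈ Icc a b, V t = V a + matInt W a t) :
    (∀ t ∈ Icc a b, ((V t)ᴴ * Q t * V t).IsHermitian) ∧
    IsAUCOn (fun t => (V t)ᴴ * Q t * V t) a b ∧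
    ((∀ t ∈ Icc a b, (Q t).PosSemidef) →
      ∀ t ∈ Icc a b, ((V t)ᴴ * Q t * V t).PosSemidef) :=
  statement4_general a b Q hQherm hQ V W hW hV

end Paper
end

section
/- Let n ∈ ℕ, let I ⊆ ℝ be an open interval, and let Q : I → ℂ^{n×n} be pointwise Hermitian. Then Q is weakly decreasing (i.e., Q(t1) ≤ Q(t0) in the Loewner order whenever t0 ≤ t1 in I) if and only if all of the following hold: Q is differentiable at almost every t ∈ I, its a.e. derivative Q̇ is locally Bochner-integrable on I, Q̇(t) ≤ 0 in the Loewner order for almost every t ∈ I, and Q(s) − Q(r) ≤ ∫_r^s Q̇(t) dt for all r ≤ s in I. -/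
open MeasureTheory Matrix Set Filter Topology
open scoped ComplexOrder ENNReal

namespace Paper

/-!
If `Q` decreases, every real quadratic form `t ↦ Re (v* Q(t) v)` is antitone on `I`, so by
Lebesgue's theorem it is differentiable a.e., its derivative is locally integrable, and the
integral of the derivative over `[r, s]` is at least the (nonpositive) increment. Polarization
writes each entry of a Hermitian matrix as a fixed linear combination of four such forms, so `Q`
is entrywise differentiable a.e. and the quadratic forms of its entrywise derivative `Q̇` are the
derivatives of the scalar forms; this gives `Q̇ ≤ 0` a.e. and `Q(s) - Q(r) ≤ ∫_r^s Q̇`.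
Conversely, `Q(t₁) - Q(t₀) ≤ ∫_{t₀}^{t₁} Q̇ ≤ 0`.
-/

lemma _root_.AntitoneOn.ae_differentiableAt {f : ℝ → ℝ} {s : Set ℝ} (hs : IsOpen s)
    (hf : AntitoneOn f s) : ∀ᵐ t, t ∈ s → DifferentiableAt ℝ f t := by
  filter_upwards [hf.neg.ae_differentiableWithinAt_of_mem] with t ht hts
  simpa using ((ht hts).differentiableAt (hs.mem_nhds hts)).neg

lemma _root_.AntitoneOn.intervalIntegrable_deriv {f : ℝ → ℝ} {a b : ℝ}
    (hf : AntitoneOn f (uIcc a b)) : IntervalIntegrable (deriv f) volume a b := by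
  simpa [deriv.neg', Pi.neg_def] using hf.neg.intervalIntegrable_deriv.neg

lemma _root_.AntitoneOn.sub_le_intervalIntegral_deriv {f : ℝ → ℝ} {a b : ℝ} (hab : a ≤ b)
    (hf : AntitoneOn f (Icc a b)) : f b - f a ≤ ∫ t in a..b, deriv f t := by
  rw [← uIcc_of_le hab] at hf
  have hfab : f b ≤ f a := hf (by simp) (by simp) hab
  have hneg := hf.neg.intervalIntegral_deriv_mem_uIcc
  rw [show deriv (fun x => -f x) = fun x => -deriv f x from deriv.neg',
    intervalIntegral.integral_neg, uIcc_of_le (by linarith)] at hneg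
  linarith [hneg.2]

section QuadraticForm

variable {ι : Type*} [Fintype ι]

lemma coe_re_star_dotProduct_mulVec {M : Matrix ι ι ℂ} (hM : M.IsHermitian) (v : ι → ℂ) :
    ((star v ⬝ᵥ M *ᵥ v).re : ℂ) = star v ⬝ᵥ M *ᵥ v :=
  Complex.ext rfl (by simpa using (hM.im_star_dotProduct_mulVec_self v).symm)

lemma star_dotProduct_mulVec_eq_sum (M : Matrix ι ι ℂ) (v : ι → ℂ) :
    star v ⬝ᵥ M *ᵥ v = ∑ p : ι × ι, star (v p.1) * M p.1 p.2 * v p.2 := by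
  simp only [dotProduct, mulVec, Finset.mul_sum, Fintype.sum_prod_type, Pi.star_apply, mul_assoc]

variable [DecidableEq ι]

noncomputable def polarizationVec (i j : ι) (k : Fin 4) : ι → ℂ :=
  Pi.single i 1 + Complex.I ^ (k : ℕ) • Pi.single j 1

lemma star_dotProduct_mulVec_single_add_smul_single (M : Matrix ι ι ℂ) (i j : ι) (c : ℂ) :
    star (Pi.single i 1 + c • Pi.single j 1) ⬝ᵥ M *ᵥ (Pi.single i 1 + c • Pi.single j 1) =
      M i i + c * M i j + star c * M j i + star c * c * M j j := by
  simp only [star_add, Pi.star_single, star_one, star_smul, mulVec_add, mulVec_single,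
    MulOpposite.op_one, one_smul, mulVec_smul, dotProduct_add, add_dotProduct, single_dotProduct,
    col_apply, one_mul, smul_dotProduct, smul_eq_mul, dotProduct_smul]
  ring

lemma apply_eq_sum_polarizationVec (M : Matrix ι ι ℂ) (i j : ι) :
    M i j = ∑ k : Fin 4, starRingEnd ℂ (Complex.I ^ (k : ℕ)) / 4 *
      (star (polarizationVec i j k) ⬝ᵥ M *ᵥ polarizationVec i j k) := by
  simp only [polarizationVec, star_dotProduct_mulVec_single_add_smul_single, Fin.sum_univ_four,
    Fin.isValue, Fin.coe_ofNat_eq_mod, Nat.zero_mod, Nat.one_mod, Nat.reduceMod, Nat.mod_succ,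
    pow_zero, pow_succ, one_mul, Complex.I_mul_I, map_one, map_neg, Complex.conj_I,
    RCLike.star_def, neg_mul, mul_neg, neg_neg]
  ring_nf
  rw [Complex.I_sq]
  ring

lemma _root_.Matrix.IsHermitian.apply_eq_sum_re_polarizationVec {M : Matrix ι ι ℂ}
    (hM : M.IsHermitian) (i j : ι) :
    M i j = ∑ k : Fin 4, starRingEnd ℂ (Complex.I ^ (k : ℕ)) / 4 *
      ((star (polarizationVec i j k) ⬝ᵥ M *ᵥ polarizationVec i j k).re : ℂ) := by
  simp only [coe_re_star_dotProduct_mulVec hM]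
  exact apply_eq_sum_polarizationVec M i j

lemma differentiableAt_apply_of_differentiableAt_re_polarizationVec {Q : ℝ → Matrix ι ι ℂ}
    {t : ℝ} (hQ : ∀ᶠ τ in 𝓝 t, (Q τ).IsHermitian) {i j : ι}
    (hq : ∀ k, DifferentiableAt ℝ
      (fun τ => (star (polarizationVec i j k) ⬝ᵥ Q τ *ᵥ polarizationVec i j k).re) t) :
    DifferentiableAt ℝ (fun τ => Q τ i j) t := by
  refine DifferentiableAt.congr_of_eventuallyEq ?_
    (hQ.mono fun τ hτ => hτ.apply_eq_sum_re_polarizationVec i j)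
  fun_prop

lemma integrable_apply_of_integrable_re_polarizationVec {α : Type*} [MeasurableSpace α]
    {μ : Measure α} {G : α → Matrix ι ι ℂ} (hG : ∀ᵐ t ∂μ, (G t).IsHermitian) {i j : ι}
    (hq : ∀ k, Integrable
      (fun t => (star (polarizationVec i j k) ⬝ᵥ G t *ᵥ polarizationVec i j k).re) μ) :
    Integrable (fun t => G t i j) μ := by
  refine Integrable.congr ?_ (hG.mono fun t ht => (ht.apply_eq_sum_re_polarizationVec i j).symm)
  exact integrable_finsetSum _ fun k _ => (hq k).ofReal.const_mul _

end QuadraticForm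

section Derivatives

variable {ι : Type*} {Q : ℝ → Matrix ι ι ℂ} {Q' : Matrix ι ι ℂ} {t : ℝ}

lemma hasDerivAt_star_dotProduct_mulVec [Fintype ι]
    (hQ : ∀ i j, HasDerivAt (fun τ => Q τ i j) (Q' i j) t) (v : ι → ℂ) :
    HasDerivAt (fun τ => star v ⬝ᵥ Q τ *ᵥ v) (star v ⬝ᵥ Q' *ᵥ v) t := by
  simp only [star_dotProduct_mulVec_eq_sum]
  exact HasDerivAt.fun_sum fun p _ => ((hQ p.1 p.2).const_mul _).mul_const _

lemma hasDerivAt_re_star_dotProduct_mulVec [Fintype ι]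
    (hQ : ∀ i j, HasDerivAt (fun τ => Q τ i j) (Q' i j) t) (v : ι → ℂ) :
    HasDerivAt (fun τ => (star v ⬝ᵥ Q τ *ᵥ v).re) (star v ⬝ᵥ Q' *ᵥ v).re t :=
  Complex.reCLM.hasFDerivAt.comp_hasDerivAt t (hasDerivAt_star_dotProduct_mulVec hQ v)

lemma isHermitian_of_hasDerivAt_apply (hherm : ∀ᶠ τ in 𝓝 t, (Q τ).IsHermitian)
    (hQ : ∀ i j, HasDerivAt (fun τ => Q τ i j) (Q' i j) t) : Q'.IsHermitian := by
  refine IsHermitian.ext fun i j => ?_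
  have hstar : (fun τ => star (Q τ j i)) =ᶠ[𝓝 t] fun τ => Q τ i j :=
    hherm.mono fun τ hτ => hτ.apply i j
  exact ((hQ j i).star.congr_of_eventuallyEq hstar.symm).unique (hQ i j)

end Derivatives

section MatrixIntegral

variable {n : ℕ} {G : ℝ → Matrix (Fin n) (Fin n) ℂ} {r s : ℝ}

lemma intervalIntegrable_star_dotProduct_mulVec
    (hG : ∀ i j, IntervalIntegrable (fun t => G t i j) volume r s) (v : Fin n → ℂ) :
    IntervalIntegrable (fun t => star v ⬝ᵥ G t *ᵥ v) volume r s := by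
  simp only [star_dotProduct_mulVec_eq_sum]
  simpa only [← Finset.sum_fn] using
    IntervalIntegrable.sum _ fun p _ => ((hG p.1 p.2).const_mul (star (v p.1))).mul_const (v p.2)

lemma star_dotProduct_matInt_mulVec
    (hG : ∀ i j, IntervalIntegrable (fun t => G t i j) volume r s) (v : Fin n → ℂ) :
    star v ⬝ᵥ matInt G r s *ᵥ v = ∫ t in r..s, star v ⬝ᵥ G t *ᵥ v := by
  simp only [star_dotProduct_mulVec_eq_sum, matInt, of_apply]
  rw [intervalIntegral.integral_finsetSum fun p _ => ((hG p.1 p.2).const_mul _).mul_const _]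
  simp only [intervalIntegral.integral_const_mul, intervalIntegral.integral_mul_const]

lemma re_star_dotProduct_matInt_mulVec
    (hG : ∀ i j, IntervalIntegrable (fun t => G t i j) volume r s) (v : Fin n → ℂ) :
    (star v ⬝ᵥ matInt G r s *ᵥ v).re = ∫ t in r..s, (star v ⬝ᵥ G t *ᵥ v).re := by
  rw [star_dotProduct_matInt_mulVec hG v]
  exact (Complex.reCLM.intervalIntegral_comp_comm
    (intervalIntegrable_star_dotProduct_mulVec hG v)).symm

lemma isHermitian_matInt (hG : ∀ᵐ t, t ∈ uIoc r s → (G t).IsHermitian) :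
    (matInt G r s).IsHermitian := by
  refine IsHermitian.ext fun i j => ?_
  calc star (∫ t in r..s, G t j i)
      = ∫ t in r..s, star (G t j i) :=
        (Complex.conjLIE.toLinearIsometry.intervalIntegral_comp_comm _).symm
    _ = ∫ t in r..s, G t i j :=
        intervalIntegral.integral_congr_ae (hG.mono fun t ht hts => (ht hts).apply i j)

end MatrixIntegral

section Loewner

variable {n : ℕ} {M N : Matrix (Fin n) (Fin n) ℂ}

lemma LoewnerLE.re_star_dotProduct_mulVec_le (h : LoewnerLE M N) (v : Fin n → ℂ) :
    (star v ⬝ᵥ M *ᵥ v).re ≤ (star v ⬝ᵥ N *ᵥ v).re := by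
  have := h.re_dotProduct_nonneg v
  simp only [sub_mulVec, dotProduct_sub, RCLike.re_to_complex, Complex.sub_re] at this
  linarith

lemma loewnerLE_of_re_star_dotProduct_mulVec_le (hM : M.IsHermitian) (hN : N.IsHermitian)
    (h : ∀ v, (star v ⬝ᵥ M *ᵥ v).re ≤ (star v ⬝ᵥ N *ᵥ v).re) : LoewnerLE M N := by
  refine PosSemidef.of_dotProduct_mulVec_nonneg (hN.sub hM) fun v => ?_
  rw [← coe_re_star_dotProduct_mulVec (hN.sub hM)]
  simp only [sub_mulVec, dotProduct_sub, Complex.sub_re, Complex.zero_le_real, sub_nonneg]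
  exact h v

end Loewner

lemma loewnerLE_of_sub_loewnerLE_matInt {n : ℕ} {Q Q' : ℝ → Matrix (Fin n) (Fin n) ℂ} {r s : ℝ}
    (hr : (Q r).IsHermitian) (hs : (Q s).IsHermitian) (hrs : r ≤ s)
    (hint : ∀ i j, IntervalIntegrable (fun t => Q' t i j) volume r s)
    (hneg : ∀ᵐ t, t ∈ Ioc r s → LoewnerLE (Q' t) 0)
    (h : LoewnerLE (Q s - Q r) (matInt Q' r s)) : LoewnerLE (Q s) (Q r) := by
  refine loewnerLE_of_re_star_dotProduct_mulVec_le hs hr fun v => ?_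
  have hint_nonpos : (star v ⬝ᵥ matInt Q' r s *ᵥ v).re ≤ 0 := by
    rw [re_star_dotProduct_matInt_mulVec hint, intervalIntegral.integral_of_le hrs]
    exact setIntegral_nonpos_ae measurableSet_Ioc <| hneg.mono fun t ht hts => by
      simpa using (ht hts).re_star_dotProduct_mulVec_le v
  have := h.re_star_dotProduct_mulVec_le v
  simp only [sub_mulVec, dotProduct_sub, Complex.sub_re] at this
  linarith

noncomputable def entrywiseDeriv {ι : Type*} (Q : ℝ → Matrix ι ι ℂ) (t : ℝ) : Matrix ι ι ℂ :=
  of fun i j => deriv (fun τ => Q τ i j) t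

section Decreasing

variable {n : ℕ} {I : Set ℝ} {Q : ℝ → Matrix (Fin n) (Fin n) ℂ}

lemma antitoneOn_re_star_dotProduct_mulVec
    (hdec : ∀ t0 t1, t0 ∈ I → t1 ∈ I → t0 ≤ t1 → LoewnerLE (Q t1) (Q t0)) (v : Fin n → ℂ) :
    AntitoneOn (fun t => (star v ⬝ᵥ Q t *ᵥ v).re) I :=
  fun _ hx _ hy hxy => (hdec _ _ hx hy hxy).re_star_dotProduct_mulVec_le v

variable (hI : IsOpen I) (hQ : ∀ t ∈ I, (Q t).IsHermitian)
  (hanti : ∀ v, AntitoneOn (fun t => (star v ⬝ᵥ Q t *ᵥ v).re) I)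
include hI hQ hanti

lemma ae_hasDerivAt_entrywiseDeriv :
    ∀ᵐ t, t ∈ I → ∀ i j, HasDerivAt (fun τ => Q τ i j) (entrywiseDeriv Q t i j) t := by
  have hdiff : ∀ i j k, ∀ᵐ t, t ∈ I → DifferentiableAt ℝ (fun τ =>
      (star (polarizationVec i j k) ⬝ᵥ Q τ *ᵥ polarizationVec i j k).re) t :=
    fun i j k => (hanti _).ae_differentiableAt hI
  filter_upwards [ae_all_iff.2 fun i => ae_all_iff.2 fun j => ae_all_iff.2 (hdiff i j)]
    with t ht htI i j
  exact (differentiableAt_apply_of_differentiableAt_re_polarizationVec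
    (eventually_of_mem (hI.mem_nhds htI) hQ) fun k => ht i j k htI).hasDerivAt

lemma ae_isHermitian_entrywiseDeriv : ∀ᵐ t, t ∈ I → (entrywiseDeriv Q t).IsHermitian := by
  filter_upwards [ae_hasDerivAt_entrywiseDeriv hI hQ hanti] with t ht htI
  exact isHermitian_of_hasDerivAt_apply (eventually_of_mem (hI.mem_nhds htI) hQ) (ht htI)

lemma ae_re_star_dotProduct_entrywiseDeriv_mulVec : ∀ᵐ t, t ∈ I → ∀ v,
    (star v ⬝ᵥ entrywiseDeriv Q t *ᵥ v).re = deriv (fun τ => (star v ⬝ᵥ Q τ *ᵥ v).re) t := by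
  filter_upwards [ae_hasDerivAt_entrywiseDeriv hI hQ hanti] with t ht htI v
  exact (hasDerivAt_re_star_dotProduct_mulVec (ht htI) v).deriv.symm

lemma ae_entrywiseDeriv_loewnerLE_zero : ∀ᵐ t, t ∈ I → LoewnerLE (entrywiseDeriv Q t) 0 := by
  filter_upwards [ae_isHermitian_entrywiseDeriv hI hQ hanti,
    ae_re_star_dotProduct_entrywiseDeriv_mulVec hI hQ hanti] with t hherm hderiv htI
  refine loewnerLE_of_re_star_dotProduct_mulVec_le (hherm htI) isHermitian_zero fun v => ?_
  rw [hderiv htI, ← derivWithin_of_isOpen hI htI]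
  simpa using (hanti v).derivWithin_nonpos

variable (hIc : I.OrdConnected)
include hIc

lemma integrableOn_entrywiseDeriv {a b : ℝ} (ha : a ∈ I) (hb : b ∈ I) (i j : Fin n) :
    IntegrableOn (fun t => entrywiseDeriv Q t i j) (Icc a b) := by
  rcases le_or_gt a b with hab | hab
  swap
  · simp [Icc_eq_empty hab.not_ge]
  have hsub : Icc a b ⊆ I := hIc.out ha hb
  have hae : ∀ᵐ t ∂volume.restrict (Icc a b), t ∈ I :=
    (ae_restrict_iff' measurableSet_Icc).2 (Eventually.of_forall hsub)
  refine integrable_apply_of_integrable_re_polarizationVec ?_ fun k => ?_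
  · filter_upwards [hae, ae_restrict_of_ae (ae_isHermitian_entrywiseDeriv hI hQ hanti)]
      with t htI ht using ht htI
  · have hderiv := ae_re_star_dotProduct_entrywiseDeriv_mulVec hI hQ hanti
    refine Integrable.congr ?_ <| by
      filter_upwards [hae, ae_restrict_of_ae hderiv] with t htI ht using (ht htI _).symm
    rw [← uIcc_of_le hab] at hsub
    exact (intervalIntegrable_iff_integrableOn_Icc_of_le hab).1
      ((hanti _).mono hsub).intervalIntegrable_deriv

lemma sub_loewnerLE_matInt_entrywiseDeriv {r s : ℝ} (hr : r ∈ I) (hs : s ∈ I) (hrs : r ≤ s) :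
    LoewnerLE (Q s - Q r) (matInt (entrywiseDeriv Q) r s) := by
  have hsub : Icc r s ⊆ I := hIc.out hr hs
  have huIoc : ∀ t ∈ uIoc r s, t ∈ I := fun t ht =>
    hsub (Ioc_subset_Icc_self (by rwa [uIoc_of_le hrs] at ht))
  have hint : ∀ i j, IntervalIntegrable (fun t => entrywiseDeriv Q t i j) volume r s :=
    fun i j => (intervalIntegrable_iff_integrableOn_Icc_of_le hrs).2
      (integrableOn_entrywiseDeriv hI hQ hanti hIc hr hs i j)
  refine loewnerLE_of_re_star_dotProduct_mulVec_le ((hQ s hs).sub (hQ r hr))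
    (isHermitian_matInt ((ae_isHermitian_entrywiseDeriv hI hQ hanti).mono
      fun t ht hts => ht (huIoc t hts))) fun v => ?_
  calc (star v ⬝ᵥ (Q s - Q r) *ᵥ v).re
      = (star v ⬝ᵥ Q s *ᵥ v).re - (star v ⬝ᵥ Q r *ᵥ v).re := by
        simp only [sub_mulVec, dotProduct_sub, Complex.sub_re]
    _ ≤ ∫ t in r..s, deriv (fun τ => (star v ⬝ᵥ Q τ *ᵥ v).re) t :=
        ((hanti v).mono hsub).sub_le_intervalIntegral_deriv hrs
    _ = ∫ t in r..s, (star v ⬝ᵥ entrywiseDeriv Q t *ᵥ v).re :=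
        intervalIntegral.integral_congr_ae ((ae_re_star_dotProduct_entrywiseDeriv_mulVec hI hQ
          hanti).mono fun t ht hts => (ht (huIoc t hts) v).symm)
    _ = (star v ⬝ᵥ matInt (entrywiseDeriv Q) r s *ᵥ v).re :=
        (re_star_dotProduct_matInt_mulVec hint v).symm

end Decreasing

/-- a pointwise Hermitian `Q` on an open interval is weakly decreasing iff it
is locally AUC (in the a.e.-derivative form) with a.e. nonpositive derivative. -/
theorem statement5 {n : ℕ} (I : Set ℝ) (hIopen : IsOpen I) (hIconn : I.OrdConnected)
    (Q : ℝ → Matrix (Fin n) (Fin n) ℂ) (hQherm : ∀ t ∈ I, (Q t).IsHermitian) :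
    (∀ t0 t1 : ℝ, t0 ∈ I → t1 ∈ I → t0 ≤ t1 → LoewnerLE (Q t1) (Q t0)) ↔
    ∃ Q' : ℝ → Matrix (Fin n) (Fin n) ℂ,
      (∀ᵐ t ∂volume, t ∈ I → ∀ i j, HasDerivAt (fun τ => Q τ i j) (Q' t i j) t) ∧
      (∀ a b : ℝ, a ∈ I → b ∈ I → ∀ i j, IntegrableOn (fun t => Q' t i j) (Icc a b)) ∧
      (∀ᵐ t ∂volume, t ∈ I → LoewnerLE (Q' t) 0) ∧
      ∀ r s : ℝ, r ∈ I → s ∈ I → r ≤ s → LoewnerLE (Q s - Q r) (matInt Q' r s) := by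
  constructor
  · intro hdec
    have hanti := antitoneOn_re_star_dotProduct_mulVec hdec
    exact ⟨entrywiseDeriv Q, ae_hasDerivAt_entrywiseDeriv hIopen hQherm hanti,
      fun a b ha hb => integrableOn_entrywiseDeriv hIopen hQherm hanti hIconn ha hb,
      ae_entrywiseDeriv_loewnerLE_zero hIopen hQherm hanti,
      fun r s hr hs => sub_loewnerLE_matInt_entrywiseDeriv hIopen hQherm hanti hIconn hr hs⟩
  · rintro ⟨Q', -, hint, hneg, hineq⟩ t0 t1 ht0 ht1 h01
    exact loewnerLE_of_sub_loewnerLE_matInt (hQherm t0 ht0) (hQherm t1 ht1) h01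
      (fun i j => (intervalIntegrable_iff_integrableOn_Icc_of_le h01).2 (hint t0 t1 ht0 ht1 i j))
      (hneg.mono fun t ht hts => ht (hIconn.out ht0 ht1 (Ioc_subset_Icc_self hts)))
      (hineq t0 t1 ht0 ht1 h01)

end Paper
end

section
/- Consider an LTV system on an open interval I ⊆ ℝ with coefficients A, B, C, D, let V : I × ℂ^n → ℝ be a storage function for this system, let t0 ∈ I, and let X be a fundamental solution matrix for A anchored at t0. Then: (1) for every x0 ∈ ℂ^n and all r ≤ s in I, V(s, X(s)x0) ≤ V(r, X(r)x0); (2) if moreover V = V_Q for some Q : I → ℂ^{n×n} pointwise Hermitian positive semidefinite, then the pointwise Hermitian positive semidefinite matrix function Q^X : I → ℂ^{n×n}, Q^X(t) = X(t)* Q(t) X(t), is weakly decreasing. -/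
open MeasureTheory Matrix Set Filter Topology
open scoped ComplexOrder ENNReal

namespace Paper

/-! With zero input, `t ↦ X t *ᵥ x0` is a state trajectory: it is continuous, hence bounded on
compact subintervals, so its output `C *ᵥ X *ᵥ x0` is locally `L²`. Its supply vanishes, so the
dissipation inequality says that `V` decreases along it. For `V = V_Q` this is the decrease of
the quadratic form of `Xᴴ Q X`. -/

open intervalIntegral

section LocallyAbsolutelyContinuous

variable {I : Set ℝ}

lemma intervalIntegrable_of_forall_integrableOn_Icc {E : Type*} [NormedAddCommGroup E]
    {f : ℝ → E} (hf : ∀ a b : ℝ, a ∈ I → b ∈ I → IntegrableOn f (Icc a b)) {s t : ℝ} (hs : s ∈ I)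
    (ht : t ∈ I) : IntervalIntegrable f volume s t :=
  (hf _ _ (min_rec' (· ∈ I) hs ht) (max_rec' (· ∈ I) hs ht)).intervalIntegrable

lemma MatLocAC.mulVec {k l : ℕ} {X X' : ℝ → Matrix (Fin k) (Fin l) ℂ} (hX : MatLocAC I X X')
    (v : Fin l → ℂ) : VecLocAC I (fun t => X t *ᵥ v) (fun t => X' t *ᵥ v) := by
  obtain ⟨hint, heq⟩ := hX
  refine ⟨fun a b ha hb i => ?_, fun s t hs ht i => ?_⟩
  · simpa only [IntegrableOn, Matrix.mulVec, dotProduct] using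
      integrable_finsetSum Finset.univ fun j _ => (hint a b ha hb i j).mul_const (v j)
  · have hii (j : Fin l) : IntervalIntegrable (fun τ => X' τ i j * v j) volume s t :=
      (intervalIntegrable_of_forall_integrableOn_Icc (hint · · · · i j) hs ht).mul_const (v j)
    simp only [Matrix.mulVec, dotProduct, heq s t hs ht i, add_mul, Finset.sum_add_distrib,
      integral_finsetSum fun j _ => hii j, intervalIntegral.integral_mul_const]

variable {k : ℕ} {x x' : ℝ → Fin k → ℂ}

lemma VecLocAC.continuousOn_Icc (hI : I.OrdConnected) (hx : VecLocAC I x x') {a b : ℝ}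
    (ha : a ∈ I) (hb : b ∈ I) (i : Fin k) : ContinuousOn (fun t => x t i) (Icc a b) := by
  have hprim := (continuousOn_primitive_interval (hx.1 _ _ (min_rec' (· ∈ I) ha hb)
    (max_rec' (· ∈ I) ha hb) i)).mono Icc_subset_uIcc
  exact (continuousOn_const.add hprim).congr fun t ht => hx.2 a t ha (hI.out ha hb ht) i

lemma VecLocAC.memLp_top (hI : I.OrdConnected) (hx : VecLocAC I x x') {a b : ℝ} (ha : a ∈ I)
    (hb : b ∈ I) (i : Fin k) : MemLp (fun t => x t i) ⊤ (volume.restrict (Icc a b)) := by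
  have hcont := hx.continuousOn_Icc hI ha hb i
  obtain ⟨M, hM⟩ := isCompact_Icc.exists_bound_of_continuousOn hcont
  exact memLp_top_of_bound (hcont.aestronglyMeasurable measurableSet_Icc) M
    ((ae_restrict_iff' measurableSet_Icc).mpr (ae_of_all _ hM))

end LocallyAbsolutelyContinuous

lemma MemLocLp.mulVec {k l : ℕ} {p : ℝ≥0∞} {I : Set ℝ} {C : ℝ → Matrix (Fin k) (Fin l) ℂ}
    {x : ℝ → Fin l → ℂ} (hC : MemLocLp p I C)
    (hx : ∀ a b : ℝ, a ∈ I → b ∈ I → ∀ j, MemLp (fun t => x t j) ⊤ (volume.restrict (Icc a b))) :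
    VecMemLocLp p I (fun t => C t *ᵥ x t) := fun a b ha hb i => by
  simpa only [Matrix.mulVec, dotProduct, Pi.smul_apply, smul_eq_mul, Pi.mul_apply] using
    memLp_finsetSum Finset.univ fun j _ => (hx a b ha hb j).smul (hC a b ha hb i j)

section Storage

variable {n m : ℕ} {I : Set ℝ} {A : ℝ → Matrix (Fin n) (Fin n) ℂ}
  {B : ℝ → Matrix (Fin n) (Fin m) ℂ} {C : ℝ → Matrix (Fin m) (Fin n) ℂ}
  {D : ℝ → Matrix (Fin m) (Fin m) ℂ}

lemma isSIOSol_zero_input (hI : I.OrdConnected) (hC : MemLocLp 2 I C)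
    {x x' : ℝ → Fin n → ℂ} (hx : VecLocAC I x x') (hode : ∀ᵐ t, t ∈ I → x' t = A t *ᵥ x t) :
    IsSIOSol I A B C D x 0 (fun t => C t *ᵥ x t) := by
  refine ⟨fun _ _ _ _ _ => MemLp.zero', hC.mulVec fun a b ha hb => hx.memLp_top hI ha hb,
    ⟨x', hx, ?_⟩, ae_of_all _ fun t _ => by simp⟩
  filter_upwards [hode] with t ht htI
  simp [ht htI]

lemma IsStorage.le_of_zero_input {V : ℝ → (Fin n → ℂ) → ℝ} (hV : IsStorage I A B C D V)
    {x : ℝ → Fin n → ℂ} {y : ℝ → Fin m → ℂ} (hsol : IsSIOSol I A B C D x 0 y) {r s : ℝ}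
    (hr : r ∈ I) (hs : s ∈ I) (hrs : r ≤ s) : V s (x s) ≤ V r (x r) := by
  have := hV.2.2 x 0 y hsol r s hr hs hrs
  simp only [supply, Pi.zero_apply, dotProduct_zero, Complex.zero_re,
    intervalIntegral.integral_zero] at this
  linarith

lemma IsStorage.le_of_fundamental {V : ℝ → (Fin n → ℂ) → ℝ} (hV : IsStorage I A B C D V)
    (hI : I.OrdConnected) (hC : MemLocLp 2 I C) {t0 : ℝ} {X : ℝ → Matrix (Fin n) (Fin n) ℂ}
    (hX : IsFundamental I A t0 X) (x0 : Fin n → ℂ) {r s : ℝ} (hr : r ∈ I) (hs : s ∈ I)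
    (hrs : r ≤ s) : V s (X s *ᵥ x0) ≤ V r (X r *ᵥ x0) := by
  obtain ⟨-, -, -, X', hXAC, hode⟩ := hX
  refine hV.le_of_zero_input (isSIOSol_zero_input hI hC (hXAC.mulVec x0) ?_) hr hs hrs
  filter_upwards [hode] with t ht htI
  rw [ht htI, mulVec_mulVec]

end Storage

section Quadratic

variable {k : ℕ}

lemma quadStorage_mulVec (Q X : ℝ → Matrix (Fin k) (Fin k) ℂ) (t : ℝ) (x : Fin k → ℂ) :
    quadStorage Q t (X t *ᵥ x) = quadStorage (fun t => (X t)ᴴ * Q t * X t) t x := by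
  simp only [quadStorage, star_mulVec, dotProduct_mulVec, vecMul_vecMul, mulVec_mulVec,
    Matrix.mul_assoc]

lemma loewnerLE_of_quadStorage_le {Q : ℝ → Matrix (Fin k) (Fin k) ℂ} {r s : ℝ}
    (hr : (Q r).IsHermitian) (hs : (Q s).IsHermitian)
    (h : ∀ x, quadStorage Q s x ≤ quadStorage Q r x) : LoewnerLE (Q s) (Q r) := by
  refine PosSemidef.of_dotProduct_mulVec_nonneg (hr.sub hs) fun x => ?_
  refine RCLike.nonneg_iff.mpr ⟨?_, (hr.sub hs).im_star_dotProduct_mulVec_self x⟩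
  have := h x
  simp only [quadStorage] at this
  simp only [sub_mulVec, dotProduct_sub, map_sub, RCLike.re_to_complex]
  linarith

end Quadratic

theorem statement6_general {n m : ℕ} (I : Set ℝ) (hIconn : I.OrdConnected)
    (A : ℝ → Matrix (Fin n) (Fin n) ℂ) (B : ℝ → Matrix (Fin n) (Fin m) ℂ)
    (C : ℝ → Matrix (Fin m) (Fin n) ℂ) (D : ℝ → Matrix (Fin m) (Fin m) ℂ)
    (hLTV : IsLTV I A B C D)
    (V : ℝ → (Fin n → ℂ) → ℝ) (hV : IsStorage I A B C D V)
    (t0 : ℝ) (X : ℝ → Matrix (Fin n) (Fin n) ℂ) (hX : IsFundamental I A t0 X) :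
    (∀ x0 : Fin n → ℂ, ∀ r s : ℝ, r ∈ I → s ∈ I → r ≤ s →
        V s (X s *ᵥ x0) ≤ V r (X r *ᵥ x0)) ∧
    ∀ Q : ℝ → Matrix (Fin n) (Fin n) ℂ, (∀ t ∈ I, (Q t).PosSemidef) →
      (∀ t ∈ I, ∀ x : Fin n → ℂ, V t x = quadStorage Q t x) →
      (∀ t ∈ I, ((X t)ᴴ * Q t * X t).PosSemidef) ∧
      ∀ r s : ℝ, r ∈ I → s ∈ I → r ≤ s →
        LoewnerLE ((X s)ᴴ * Q s * X s) ((X r)ᴴ * Q r * X r) := by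
  have hdecay (x0 : Fin n → ℂ) (r s : ℝ) (hr : r ∈ I) (hs : s ∈ I) (hrs : r ≤ s) :=
    hV.le_of_fundamental hIconn hLTV.2.2.1 hX x0 hr hs hrs
  refine ⟨hdecay, fun Q hQ hVQ => ?_⟩
  have hQX (t : ℝ) (ht : t ∈ I) : ((X t)ᴴ * Q t * X t).PosSemidef :=
    (hQ t ht).conjTranspose_mul_mul_same (X t)
  refine ⟨hQX, fun r s hr hs hrs =>
    loewnerLE_of_quadStorage_le (Q := fun t => (X t)ᴴ * Q t * X t) (hQX r hr).1 (hQX s hs).1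
      fun x0 => ?_⟩
  simpa only [← quadStorage_mulVec, ← hVQ s hs, ← hVQ r hr] using hdecay x0 r s hr hs hrs

/-- storage functions decrease along input-free trajectories; for a quadratic
storage function `V_Q`, the function `Q^X = X^* Q X` is weakly decreasing (Loewner order). -/
theorem statement6 {n m : ℕ} (I : Set ℝ) (hIopen : IsOpen I) (hIconn : I.OrdConnected)
    (A : ℝ → Matrix (Fin n) (Fin n) ℂ) (B : ℝ → Matrix (Fin n) (Fin m) ℂ)
    (C : ℝ → Matrix (Fin m) (Fin n) ℂ) (D : ℝ → Matrix (Fin m) (Fin m) ℂ)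
    (hLTV : IsLTV I A B C D)
    (V : ℝ → (Fin n → ℂ) → ℝ) (hV : IsStorage I A B C D V)
    (t0 : ℝ) (X : ℝ → Matrix (Fin n) (Fin n) ℂ) (hX : IsFundamental I A t0 X) :
    (∀ x0 : Fin n → ℂ, ∀ r s : ℝ, r ∈ I → s ∈ I → r ≤ s →
        V s (X s *ᵥ x0) ≤ V r (X r *ᵥ x0)) ∧
    ∀ Q : ℝ → Matrix (Fin n) (Fin n) ℂ, (∀ t ∈ I, (Q t).PosSemidef) →
      (∀ t ∈ I, ∀ x : Fin n → ℂ, V t x = quadStorage Q t x) →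
      (∀ t ∈ I, ((X t)ᴴ * Q t * X t).PosSemidef) ∧
      ∀ r s : ℝ, r ∈ I → s ∈ I → r ≤ s →
        LoewnerLE ((X s)ᴴ * Q s * X s) ((X r)ᴴ * Q r * X r) :=
  statement6_general I hIconn A B C D hLTV V hV t0 X hX

end Paper
end

section
/- Consider an LTV system on an open interval I ⊆ ℝ with coefficients A, B, C, D, and let Q : I → ℂ^{n×n} be pointwise Hermitian positive semidefinite and locally absolutely upper semicontinuous such that V_Q is a storage function for this system. Suppose Q̃ : I → ℂ^{n×n} is pointwise Hermitian positive semidefinite and, for every t ∈ I, the one-sided limits L(t) := lim_{s→t⁻} Q(s) and R(t) := lim_{s→t⁺} Q(s) exist and satisfy L(t) ≥ Q̃(t) ≥ R(t) in the Loewner order. Then V_{Q̃} is a storage function for the same LTV system. -/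
/-! The dissipation inequality for `V_Q` on `[s₀, s₁] ⊂ (t₀, t₁)` survives the limit `s₀ ↓ t₀`,
`s₁ ↑ t₁`, because the state and the accumulated supply are continuous; in the limit `Q(s₀)` and
`Q(s₁)` become `R(t₀)` and `L(t₁)`. Since `Q̃(t₁) ≤ L(t₁)` and `R(t₀) ≤ Q̃(t₀)`, replacing them by
`Q̃` only decreases the left-hand side. -/

open MeasureTheory Matrix Set Filter Topology
open scoped ComplexOrder ENNReal

namespace Paper

lemma quadStorage_nonneg {k : ℕ} {Q : ℝ → Matrix (Fin k) (Fin k) ℂ} {t : ℝ}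
    (hQ : (Q t).PosSemidef) (v : Fin k → ℂ) : 0 ≤ quadStorage Q t v :=
  mul_nonneg (by norm_num) (Complex.le_def.mp (hQ.dotProduct_mulVec_nonneg v)).1

lemma quadStorage_le_of_loewnerLE {k : ℕ} {P Q : ℝ → Matrix (Fin k) (Fin k) ℂ} {s t : ℝ}
    (h : LoewnerLE (P s) (Q t)) (v : Fin k → ℂ) : quadStorage P s v ≤ quadStorage Q t v := by
  have hdiff := (Complex.le_def.mp (h.dotProduct_mulVec_nonneg (x := v))).1
  rw [sub_mulVec, dotProduct_sub, Complex.sub_re, Complex.zero_re] at hdiff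
  simp only [quadStorage]
  linarith

lemma tendsto_quadStorage {α : Type*} {l : Filter α} {k : ℕ} {Q : ℝ → Matrix (Fin k) (Fin k) ℂ}
    {τ : α → ℝ} {v : α → Fin k → ℂ} {P : ℝ → Matrix (Fin k) (Fin k) ℂ} {t : ℝ} {w : Fin k → ℂ}
    (hQ : ∀ i j, Tendsto (fun a => Q (τ a) i j) l (𝓝 (P t i j))) (hv : Tendsto v l (𝓝 w)) :
    Tendsto (fun a => quadStorage Q (τ a) (v a)) l (𝓝 (quadStorage P t w)) := by
  have hQ' : Tendsto (fun a => Q (τ a)) l (𝓝 (P t)) :=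
    tendsto_pi_nhds.mpr fun i => tendsto_pi_nhds.mpr fun j => hQ i j
  have hform : Continuous fun p : Matrix (Fin k) (Fin k) ℂ × (Fin k → ℂ) =>
      star p.2 ⬝ᵥ (p.1 *ᵥ p.2) :=
    (continuous_star.comp continuous_snd).dotProduct
      (continuous_fst.matrix_mulVec continuous_snd)
  have h := (hform.tendsto (P t, w)).comp (hQ'.prodMk_nhds hv)
  exact (Complex.continuous_re.tendsto _).comp h |>.const_mul (1 / 2 : ℝ)

lemma integrable_re_star_dotProduct {α : Type*} [MeasurableSpace α] {μ : Measure α} {k : ℕ}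
    {u y : α → Fin k → ℂ} (hu : ∀ i, MemLp (fun t => u t i) 2 μ)
    (hy : ∀ i, MemLp (fun t => y t i) 2 μ) :
    Integrable (fun t => (star (y t) ⬝ᵥ u t).re) μ := by
  refine Integrable.re (f := fun t => star (y t) ⬝ᵥ u t) ?_
  simp only [dotProduct, Pi.star_apply]
  exact integrable_finsetSum _ fun i _ => (hy i).star.integrable_mul (hu i)

lemma VecLocAC.continuousOn {k : ℕ} {I : Set ℝ} {x x' : ℝ → Fin k → ℂ} (hx : VecLocAC I x x')
    {a b : ℝ} (hI : Icc a b ⊆ I) : ContinuousOn x (Icc a b) := by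
  rcases lt_or_ge b a with hba | hab
  · simp [Icc_eq_empty_of_lt hba]
  have ha : a ∈ I := hI (left_mem_Icc.2 hab)
  have hb : b ∈ I := hI (right_mem_Icc.2 hab)
  refine continuousOn_pi.mpr fun i => ?_
  have hprim := intervalIntegral.continuousOn_primitive_interval (f := fun τ => x' τ i)
    (μ := volume) (a := a) (b := b) (by rw [uIcc_of_le hab]; exact hx.1 a b ha hb i)
  rw [uIcc_of_le hab] at hprim
  exact (continuousOn_const.add hprim).congr fun t ht => hx.2 a t ha (hI ht) i

section supply

variable {k : ℕ} {u y : ℝ → Fin k → ℂ} {a b : ℝ}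

lemma continuousOn_supply (hab : a ≤ b)
    (h : IntegrableOn (fun t => (star (y t) ⬝ᵥ u t).re) (Icc a b)) :
    ContinuousOn (supply u y a) (Icc a b) := by
  have := intervalIntegral.continuousOn_primitive_interval (a := a) (b := b)
    (by rwa [uIcc_of_le hab])
  rwa [uIcc_of_le hab] at this

lemma supply_sub_supply (h : IntegrableOn (fun t => (star (y t) ⬝ᵥ u t).re) (Icc a b))
    {s t : ℝ} (hs : s ∈ Icc a b) (ht : t ∈ Icc a b) :
    supply u y a t - supply u y a s = supply u y s t :=
  intervalIntegral.integral_interval_sub_left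
    ((h.mono_set (uIcc_subset_Icc (left_mem_Icc.2 (hs.1.trans hs.2)) ht)).intervalIntegrable)
    ((h.mono_set (uIcc_subset_Icc (left_mem_Icc.2 (hs.1.trans hs.2)) hs)).intervalIntegrable)

end supply

lemma _root_.ContinuousOn.tendsto_nhdsGT_left {E : Type*} [TopologicalSpace E] {f : ℝ → E} {a b : ℝ}
    (hf : ContinuousOn f (Icc a b)) (hab : a < b) : Tendsto f (𝓝[>] a) (𝓝 (f a)) :=
  ((hf a (left_mem_Icc.2 hab.le)).mono_of_mem_nhdsWithin (Icc_mem_nhdsGT hab)).tendsto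

lemma _root_.ContinuousOn.tendsto_nhdsLT_right {E : Type*} [TopologicalSpace E] {f : ℝ → E} {a b : ℝ}
    (hf : ContinuousOn f (Icc a b)) (hab : a < b) : Tendsto f (𝓝[<] b) (𝓝 (f b)) :=
  ((hf b (right_mem_Icc.2 hab.le)).mono_of_mem_nhdsWithin (Icc_mem_nhdsLT hab)).tendsto

lemma IsStorage.quadStorage_sub_le_supply_of_tendsto {n m : ℕ} {I : Set ℝ} (hI : I.OrdConnected)
    {A : ℝ → Matrix (Fin n) (Fin n) ℂ} {B : ℝ → Matrix (Fin n) (Fin m) ℂ}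
    {C : ℝ → Matrix (Fin m) (Fin n) ℂ} {D : ℝ → Matrix (Fin m) (Fin m) ℂ}
    {Q L R : ℝ → Matrix (Fin n) (Fin n) ℂ} (hstor : IsStorage I A B C D (quadStorage Q))
    {x : ℝ → Fin n → ℂ} {u y : ℝ → Fin m → ℂ} (hsol : IsSIOSol I A B C D x u y)
    {t0 t1 : ℝ} (ht0 : t0 ∈ I) (ht1 : t1 ∈ I) (hlt : t0 < t1)
    (hR : ∀ i j, Tendsto (fun s => Q s i j) (𝓝[>] t0) (𝓝 (R t0 i j)))
    (hL : ∀ i j, Tendsto (fun s => Q s i j) (𝓝[<] t1) (𝓝 (L t1 i j))) :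
    quadStorage L t1 (x t1) - quadStorage R t0 (x t0) ≤ supply u y t0 t1 := by
  obtain ⟨x', hx, -⟩ := hsol.2.2.1
  have hI01 : Icc t0 t1 ⊆ I := hI.out ht0 ht1
  have hint := integrable_re_star_dotProduct (hsol.1 t0 t1 ht0 ht1) (hsol.2.1 t0 t1 ht0 ht1)
  have hsupply : ContinuousOn (supply u y t0) (Icc t0 t1) := continuousOn_supply hlt.le hint
  have hxc : ContinuousOn x (Icc t0 t1) := hx.continuousOn hI01
  let l := 𝓝[>] t0 ×ˢ 𝓝[<] t1
  have hlhs : Tendsto (fun p : ℝ × ℝ => quadStorage Q p.2 (x p.2) - quadStorage Q p.1 (x p.1)) l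
      (𝓝 (quadStorage L t1 (x t1) - quadStorage R t0 (x t0))) :=
    (tendsto_quadStorage (fun i j => (hL i j).comp tendsto_snd)
      ((hxc.tendsto_nhdsLT_right hlt).comp tendsto_snd)).sub
    (tendsto_quadStorage (fun i j => (hR i j).comp tendsto_fst)
      ((hxc.tendsto_nhdsGT_left hlt).comp tendsto_fst))
  have hrhs : Tendsto (fun p : ℝ × ℝ => supply u y t0 p.2 - supply u y t0 p.1) l
      (𝓝 (supply u y t0 t1)) := by
    simpa [supply] using ((hsupply.tendsto_nhdsLT_right hlt).comp tendsto_snd).sub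
      ((hsupply.tendsto_nhdsGT_left hlt).comp tendsto_fst)
  obtain ⟨c, hc0, hc1⟩ := exists_between hlt
  refine le_of_tendsto_of_tendsto hlhs hrhs ?_
  filter_upwards [prod_mem_prod (Ioo_mem_nhdsGT hc0) (Ioo_mem_nhdsLT hc1)] with p ⟨hp1, hp2⟩
  have hp1' : p.1 ∈ Icc t0 t1 := ⟨hp1.1.le, (hp1.2.trans hc1).le⟩
  have hp2' : p.2 ∈ Icc t0 t1 := ⟨(hc0.trans hp2.1).le, hp2.2.le⟩
  rw [supply_sub_supply hint hp1' hp2']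
  exact hstor.2.2 x u y hsol p.1 p.2 (hI01 hp1') (hI01 hp2') (hp1.2.trans hp2.1).le

theorem statement8_general {n m : ℕ} (I : Set ℝ) (hIconn : I.OrdConnected)
    (A : ℝ → Matrix (Fin n) (Fin n) ℂ) (B : ℝ → Matrix (Fin n) (Fin m) ℂ)
    (C : ℝ → Matrix (Fin m) (Fin n) ℂ) (D : ℝ → Matrix (Fin m) (Fin m) ℂ)
    (Q : ℝ → Matrix (Fin n) (Fin n) ℂ)
    (hstor : IsStorage I A B C D (quadStorage Q))
    (Qt : ℝ → Matrix (Fin n) (Fin n) ℂ) (hQtpsd : ∀ t ∈ I, (Qt t).PosSemidef)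
    (L R : ℝ → Matrix (Fin n) (Fin n) ℂ)
    (hL : ∀ t ∈ I, ∀ i j, Tendsto (fun s => Q s i j) (𝓝[<] t) (𝓝 (L t i j)))
    (hR : ∀ t ∈ I, ∀ i j, Tendsto (fun s => Q s i j) (𝓝[>] t) (𝓝 (R t i j)))
    (hsandwich : ∀ t ∈ I, LoewnerLE (Qt t) (L t) ∧ LoewnerLE (R t) (Qt t)) :
    IsStorage I A B C D (quadStorage Qt) := by
  refine ⟨fun t ht v => quadStorage_nonneg (hQtpsd t ht) v, fun t _ => by simp [quadStorage], ?_⟩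
  intro x u y hsol t0 t1 ht0 ht1 h01
  rcases h01.eq_or_lt with rfl | hlt
  · simp [supply]
  calc quadStorage Qt t1 (x t1) - quadStorage Qt t0 (x t0)
      ≤ quadStorage L t1 (x t1) - quadStorage R t0 (x t0) :=
        sub_le_sub (quadStorage_le_of_loewnerLE (hsandwich t1 ht1).1 _)
          (quadStorage_le_of_loewnerLE (hsandwich t0 ht0).2 _)
    _ ≤ supply u y t0 t1 :=
        hstor.quadStorage_sub_le_supply_of_tendsto hIconn hsol ht0 ht1 hlt (hR t0 ht0) (hL t1 ht1)

/-- modifying the matrix of a quadratic storage function within the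
one-sided-limit sandwich again yields a storage function. -/
theorem statement8 {n m : ℕ} (I : Set ℝ) (hIopen : IsOpen I) (hIconn : I.OrdConnected)
    (A : ℝ → Matrix (Fin n) (Fin n) ℂ) (B : ℝ → Matrix (Fin n) (Fin m) ℂ)
    (C : ℝ → Matrix (Fin m) (Fin n) ℂ) (D : ℝ → Matrix (Fin m) (Fin m) ℂ)
    (hLTV : IsLTV I A B C D)
    (Q : ℝ → Matrix (Fin n) (Fin n) ℂ) (hQpsd : ∀ t ∈ I, (Q t).PosSemidef)
    (hQauc : ∀ a b : ℝ, a ∈ I → b ∈ I → IsAUCOn Q a b)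
    (hstor : IsStorage I A B C D (quadStorage Q))
    (Qt : ℝ → Matrix (Fin n) (Fin n) ℂ) (hQtpsd : ∀ t ∈ I, (Qt t).PosSemidef)
    (L R : ℝ → Matrix (Fin n) (Fin n) ℂ)
    (hL : ∀ t ∈ I, ∀ i j, Tendsto (fun s => Q s i j) (𝓝[<] t) (𝓝 (L t i j)))
    (hR : ∀ t ∈ I, ∀ i j, Tendsto (fun s => Q s i j) (𝓝[>] t) (𝓝 (R t i j)))
    (hsandwich : ∀ t ∈ I, LoewnerLE (Qt t) (L t) ∧ LoewnerLE (R t) (Qt t)) :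
    IsStorage I A B C D (quadStorage Qt) :=
  statement8_general I hIconn A B C D Q hstor Qt hQtpsd L R hL hR hsandwich

end Paper
end

section
/- Consider an LTV system on an open interval I ⊆ ℝ with coefficients A, B, C, D, and assume that for every t0 ∈ I, x0 ∈ ℂ^n, and u ∈ L²_loc(I, ℂ^m) there exists a state-input-output solution (x,u,y) with x(t0) = x0. If the system is passive with storage function V, then for every t0 ∈ I and x0 ∈ ℂ^n the supply set S(t0,x0) := { −∫_{t0}^{t1} Re(y(t)* u(t)) dt : t1 ∈ I, t1 ≥ t0, (x,u,y) a state-input-output solution with x(t0) = x0 } is nonempty, contains 0, and is bounded above by V(t0,x0); consequently the available storage V_a(t0,x0) := sup S(t0,x0) satisfies 0 ≤ V_a(t0,x0) ≤ V(t0,x0) < ∞ for every storage function V of the system. -/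
open MeasureTheory Matrix Set Filter Topology
open scoped ComplexOrder ENNReal

namespace Paper

theorem vecMemLocLp_zero {k : ℕ} (p : ℝ≥0∞) (I : Set ℝ) :
    VecMemLocLp p I (fun _ => (0 : Fin k → ℂ)) :=
  fun _ _ _ _ _ => MemLp.zero'

section SupplySet

variable {n m : ℕ} {I : Set ℝ} {t0 : ℝ}
  {A : ℝ → Matrix (Fin n) (Fin n) ℂ} {B : ℝ → Matrix (Fin n) (Fin m) ℂ}
  {C : ℝ → Matrix (Fin m) (Fin n) ℂ} {D : ℝ → Matrix (Fin m) (Fin m) ℂ}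

theorem zero_mem_supplySet {x0 : Fin n → ℂ} {x : ℝ → Fin n → ℂ} {u y : ℝ → Fin m → ℂ}
    (ht0 : t0 ∈ I) (hsol : IsSIOSol I A B C D x u y) (hx0 : x t0 = x0) :
    (0 : ℝ) ∈ supplySet I A B C D t0 x0 :=
  ⟨t0, x, u, y, ht0, le_rfl, hsol, hx0, by simp [supply]⟩

theorem IsStorage.mem_upperBounds_supplySet {V : ℝ → (Fin n → ℂ) → ℝ}
    (hV : IsStorage I A B C D V) (ht0 : t0 ∈ I) (x0 : Fin n → ℂ) :
    V t0 x0 ∈ upperBounds (supplySet I A B C D t0 x0) := by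
  rintro c ⟨t1, x, u, y, ht1, ht01, hsol, rfl, rfl⟩
  have hdiss := hV.2.2 x u y hsol t0 t1 ht0 ht1 ht01
  have hnonneg := hV.1 t1 ht1 (x t1)
  linarith

end SupplySet

theorem statement9_general {n m : ℕ} (I : Set ℝ)
    (A : ℝ → Matrix (Fin n) (Fin n) ℂ) (B : ℝ → Matrix (Fin n) (Fin m) ℂ)
    (C : ℝ → Matrix (Fin m) (Fin n) ℂ) (D : ℝ → Matrix (Fin m) (Fin m) ℂ)
    (hexist : ∀ t0 ∈ I, ∀ x0 : Fin n → ℂ, ∀ u : ℝ → Fin m → ℂ, VecMemLocLp 2 I u →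
        ∃ x y, IsSIOSol I A B C D x u y ∧ x t0 = x0)
    (V : ℝ → (Fin n → ℂ) → ℝ) (hV : IsStorage I A B C D V) :
    ∀ t0 ∈ I, ∀ x0 : Fin n → ℂ,
      (supplySet I A B C D t0 x0).Nonempty ∧
      (0 : ℝ) ∈ supplySet I A B C D t0 x0 ∧
      (∀ c ∈ supplySet I A B C D t0 x0, c ≤ V t0 x0) ∧
      0 ≤ sSup (supplySet I A B C D t0 x0) ∧
      sSup (supplySet I A B C D t0 x0) ≤ V t0 x0 := by
  intro t0 ht0 x0
  obtain ⟨x, y, hsol, hx0⟩ := hexist t0 ht0 x0 _ (vecMemLocLp_zero 2 I)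
  have hzero := zero_mem_supplySet ht0 hsol hx0
  have hbound := hV.mem_upperBounds_supplySet ht0 x0
  exact ⟨⟨0, hzero⟩, hzero, hbound, le_csSup ⟨_, hbound⟩ hzero, csSup_le ⟨0, hzero⟩ hbound⟩

/-- for a passive LTV system with storage function `V`, the supply set is
nonempty, contains `0`, and is bounded above by `V(t0, x0)`; hence the available storage
satisfies `0 ≤ V_a(t0, x0) ≤ V(t0, x0)`. -/
theorem statement9 {n m : ℕ} (I : Set ℝ) (hIopen : IsOpen I) (hIconn : I.OrdConnected)
    (A : ℝ → Matrix (Fin n) (Fin n) ℂ) (B : ℝ → Matrix (Fin n) (Fin m) ℂ)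
    (C : ℝ → Matrix (Fin m) (Fin n) ℂ) (D : ℝ → Matrix (Fin m) (Fin m) ℂ)
    (hLTV : IsLTV I A B C D)
    (hexist : ∀ t0 ∈ I, ∀ x0 : Fin n → ℂ, ∀ u : ℝ → Fin m → ℂ, VecMemLocLp 2 I u →
        ∃ x y, IsSIOSol I A B C D x u y ∧ x t0 = x0)
    (V : ℝ → (Fin n → ℂ) → ℝ) (hV : IsStorage I A B C D V) :
    ∀ t0 ∈ I, ∀ x0 : Fin n → ℂ,
      (supplySet I A B C D t0 x0).Nonempty ∧
      (0 : ℝ) ∈ supplySet I A B C D t0 x0 ∧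
      (∀ c ∈ supplySet I A B C D t0 x0, c ≤ V t0 x0) ∧
      0 ≤ sSup (supplySet I A B C D t0 x0) ∧
      sSup (supplySet I A B C D t0 x0) ≤ V t0 x0 :=
  statement9_general I A B C D hexist V hV

end Paper
end
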